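/- arXiv:2410.19312 — 11 statements merged into one kernel-verified Lean document; each statement's English description precedes it below -/
import Mathlib

section
/- Let H and G be complex Hilbert spaces, let Â be a positive bounded linear operator on H, let V : G → H be a bounded linear operator with V*V = I_G, and let λ > 0. Then V*ÂV + λI_G is boundedly invertible and ‖(Â + λI)^{1/2} ∘ V ∘ (V*ÂV + λI_G)^{-1} ∘ V* ∘ (Â + λI)^{1/2}‖ ≤ 1. -/
open scoped InnerProductSpace

open ContinuousLinearMap in
/-- For a positive bounded operator `A` on a complex Hilbert space `H`,
an isometry-like `V : G →L H` with `V* V = 1`, and `μ > 0`, the operator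
`V* A V + μ I` is boundedly invertible, and for the (unique) positive square root `S`
of `A + μ I` and the (unique) inverse `B` of `V* A V + μ I` one has
`‖S ∘ V ∘ B ∘ V* ∘ S‖ ≤ 1`. -/
theorem nystrom_projection_norm_le_one
    {H G : Type*} [NormedAddCommGroup H] [InnerProductSpace ℂ H] [CompleteSpace H]
    [NormedAddCommGroup G] [InnerProductSpace ℂ G] [CompleteSpace G]
    (A : H →L[ℂ] H) (hA : A.IsPositive)
    (V : G →L[ℂ] H) (hV : adjoint V ∘L V = 1)
    (μ : ℝ) (hμ : 0 < μ)
    (S : H →L[ℂ] H) (hS : S.IsPositive) (hS2 : S * S = A + (μ : ℂ) • 1) :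
    IsUnit (adjoint V ∘L A ∘L V + (μ : ℂ) • 1) ∧
      ∀ B : G →L[ℂ] G,
        (adjoint V ∘L A ∘L V + (μ : ℂ) • 1) * B = 1 →
        B * (adjoint V ∘L A ∘L V + (μ : ℂ) • 1) = 1 →
        ‖S ∘L V ∘L B ∘L adjoint V ∘L S‖ ≤ 1 := by
  set M : G →L[ℂ] G := adjoint V ∘L A ∘L V + (μ : ℂ) • 1 with hMdef
  have hP : (adjoint V ∘L A ∘L V).IsPositive := hA.adjoint_conj V
  -- M is positive
  have hμ1 : ((μ : ℂ) • (1 : G →L[ℂ] G)).IsPositive := by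
    refine ContinuousLinearMap.isPositive_def'.mpr ⟨?_, ?_⟩
    · rw [IsSelfAdjoint, star_smul, star_one]
      norm_num
    · intro x
      rw [ContinuousLinearMap.reApplyInnerSelf]
      simp only [ContinuousLinearMap.smul_apply, ContinuousLinearMap.one_apply]
      rw [inner_smul_left, Complex.conj_ofReal, RCLike.re_to_complex, Complex.re_ofReal_mul]
      have h7 : (0:ℝ) ≤ RCLike.re ⟪x, x⟫_ℂ := inner_self_nonneg
      rw [RCLike.re_to_complex] at h7
      exact mul_nonneg hμ.le h7
  have hM : M.IsPositive := hP.add hμ1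
  have hMsa : IsSelfAdjoint M := hM.isSelfAdjoint
  -- coercivity
  have hcoer : ∀ x : G, ‖x‖ ^ 2 * μ.toNNReal ≤ ‖⟪M x, x⟫_ℂ‖ := by
    intro x
    have h1 : (μ.toNNReal : ℝ) = μ := Real.coe_toNNReal _ hμ.le
    have h4 : (0:ℝ) ≤ RCLike.re ⟪(adjoint V ∘L A ∘L V) x, x⟫_ℂ := hP.re_inner_nonneg_left x
    have hx : ⟪M x, x⟫_ℂ = ⟪(adjoint V ∘L A ∘L V) x, x⟫_ℂ + (μ:ℂ) * ⟪x, x⟫_ℂ := by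
      rw [hMdef]
      simp only [ContinuousLinearMap.add_apply, inner_add_left,
        ContinuousLinearMap.smul_apply, ContinuousLinearMap.one_apply]
      rw [inner_smul_left, Complex.conj_ofReal]
    have h5 : μ * ‖x‖ ^ 2 ≤ RCLike.re ⟪M x, x⟫_ℂ := by
      rw [hx, map_add]
      have h6 : RCLike.re ((μ:ℂ) * ⟪x, x⟫_ℂ) = μ * ‖x‖^2 := by
        rw [RCLike.re_to_complex, Complex.re_ofReal_mul, ← RCLike.re_to_complex,
          inner_self_eq_norm_sq]
      linarith
    calc ‖x‖ ^ 2 * μ.toNNReal = μ * ‖x‖ ^ 2 := by rw [h1]; ring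
      _ ≤ RCLike.re ⟪M x, x⟫_ℂ := h5
      _ ≤ ‖⟪M x, x⟫_ℂ‖ := RCLike.re_le_norm _
  have hUnit : IsUnit M :=
    ContinuousLinearMap.isUnit_of_forall_le_norm_inner_map M
      (c := μ.toNNReal) (by simpa using hμ) hcoer
  refine ⟨hUnit, ?_⟩
  intro B hMB hBM
  -- B is self-adjoint
  have hBadj : IsSelfAdjoint B := by
    have h1 : M * star B = 1 := by
      have := congrArg star hBM
      rwa [star_mul, hMsa.star_eq, star_one] at this
    calc star B = (B * M) * star B := by rw [hBM, one_mul]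
      _ = B * (M * star B) := by rw [mul_assoc]
      _ = B := by rw [h1, mul_one]
  set T : H →L[ℂ] H := S ∘L V ∘L B ∘L adjoint V ∘L S with hTdef
  -- T is self-adjoint
  have hTsa : IsSelfAdjoint T := by
    rw [IsSelfAdjoint, ContinuousLinearMap.star_eq_adjoint, hTdef]
    simp only [ContinuousLinearMap.adjoint_comp, ContinuousLinearMap.adjoint_adjoint,
      hS.isSelfAdjoint.adjoint_eq, hBadj.adjoint_eq]
    ext x
    simp [ContinuousLinearMap.comp_apply]
  -- key pointwise identity
  have hkey : ∀ x : G, adjoint V (S (S (V x))) = M x := by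
    intro x
    have h1 : S (S (V x)) = A (V x) + (μ:ℂ) • (V x) := by
      have := congrFun (congrArg DFunLike.coe hS2) (V x)
      simpa using this
    have h2 : adjoint V (V x) = x := by
      have := congrFun (congrArg DFunLike.coe hV) x
      simpa using this
    rw [h1, map_add, map_smul, h2]
    simp [hMdef]
  have hBMx : ∀ y : G, B (M y) = y := by
    intro y
    have := congrFun (congrArg DFunLike.coe hBM) y
    simpa using this
  -- T is idempotent
  have hTT : T * T = T := by
    ext x
    have : (T * T) x = T (T x) := rfl
    rw [this, hTdef]
    simp only [ContinuousLinearMap.comp_apply]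
    rw [hkey (B (adjoint V (S x))), hBMx]
  -- norm bound via C*-identity
  have hC : ‖T‖ * ‖T‖ = ‖T‖ := by
    have := CStarRing.norm_star_mul_self (x := T)
    rw [hTsa.star_eq, hTT] at this
    exact this.symm
  have h0 : (0:ℝ) ≤ ‖T‖ := norm_nonneg _
  nlinarith
end

section
/- Let H and G be complex Hilbert spaces, let Â be a positive bounded linear operator on H, let V : G → H be a bounded linear operator with V*V = I_G, and let λ > 0. Then the operator Q := (Â + λI)^{1/2} ∘ V ∘ (V*ÂV + λI_G)^{-1} ∘ V* ∘ (Â + λI)^{1/2} on H is an orthogonal projection, i.e., Q is self-adjoint and Q ∘ Q = Q. -/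
/-! With `T := S ∘ V` we have `T* T = V* (A + μ) V = V* A V + μ`, because `S` is self-adjoint,
`S² = A + μ` and `V* V = 1`; and `Q = T (T* T)⁻¹ T*`, the familiar orthogonal projection onto the
range of `T`. -/

open ContinuousLinearMap

lemma IsSelfAdjoint.of_mul_eq_one {R : Type*} [Monoid R] [StarMul R] {a b : R}
    (ha : IsSelfAdjoint a) (hab : a * b = 1) : IsSelfAdjoint b := by
  have hstar : star b * a = 1 := by rw [← ha.star_eq, ← star_mul, hab, star_one]
  exact left_inv_eq_right_inv hstar hab

section

variable {𝕜 E F : Type*} [RCLike 𝕜]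
  [NormedAddCommGroup E] [InnerProductSpace 𝕜 E] [CompleteSpace E]
  [NormedAddCommGroup F] [InnerProductSpace 𝕜 F] [CompleteSpace F]

lemma isStarProjection_comp_comp_adjoint_of_mul_eq_one (T : F →L[𝕜] E) (B : F →L[𝕜] F)
    (hB₁ : (adjoint T ∘L T) * B = 1) (hB₂ : B * (adjoint T ∘L T) = 1) :
    IsStarProjection (T ∘L B ∘L adjoint T) := by
  have hBsa : IsSelfAdjoint B :=
    (isPositive_adjoint_comp_self T).isSelfAdjoint.of_mul_eq_one hB₁
  refine ⟨?_, ?_⟩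
  · show (T ∘L B ∘L adjoint T) ∘L (T ∘L B ∘L adjoint T) = T ∘L B ∘L adjoint T
    calc (T ∘L B ∘L adjoint T) ∘L (T ∘L B ∘L adjoint T)
        = T ∘L (B * (adjoint T ∘L T)) ∘L B ∘L adjoint T := rfl
      _ = T ∘L B ∘L adjoint T := by rw [hB₂, one_def, id_comp]
  · rw [isSelfAdjoint_iff', adjoint_comp, adjoint_comp, adjoint_adjoint, hBsa.adjoint_eq,
      comp_assoc]

end

open ContinuousLinearMap in
theorem nystrom_Q_is_orthogonal_projection_general
    {H G : Type*} [NormedAddCommGroup H] [InnerProductSpace ℂ H] [CompleteSpace H]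
    [NormedAddCommGroup G] [InnerProductSpace ℂ G] [CompleteSpace G]
    (A : H →L[ℂ] H)
    (V : G →L[ℂ] H) (hV : adjoint V ∘L V = 1)
    (μ : ℝ)
    (S : H →L[ℂ] H) (hS : S.IsPositive) (hS2 : S * S = A + (μ : ℂ) • 1) :
    ∀ B : G →L[ℂ] G,
      (adjoint V ∘L A ∘L V + (μ : ℂ) • 1) * B = 1 →
      B * (adjoint V ∘L A ∘L V + (μ : ℂ) • 1) = 1 →
      IsSelfAdjoint (S * (V ∘L B ∘L adjoint V) * S) ∧
        (S * (V ∘L B ∘L adjoint V) * S) * (S * (V ∘L B ∘L adjoint V) * S)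
          = S * (V ∘L B ∘L adjoint V) * S := by
  intro B hB₁ hB₂
  have hSsa : adjoint S = S := hS.isSelfAdjoint.adjoint_eq
  have hgram : adjoint (S ∘L V) ∘L (S ∘L V) = adjoint V ∘L A ∘L V + (μ : ℂ) • 1 := by
    calc adjoint (S ∘L V) ∘L (S ∘L V) = adjoint V ∘L (S * S) ∘L V := by
          rw [adjoint_comp, hSsa]; rfl
      _ = adjoint V ∘L A ∘L V + (μ : ℂ) • (adjoint V ∘L V) := by
          rw [hS2, add_comp, comp_add, smul_comp, one_def, id_comp, comp_smul]
      _ = adjoint V ∘L A ∘L V + (μ : ℂ) • 1 := by rw [hV]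
  have hQ : S * (V ∘L B ∘L adjoint V) * S = (S ∘L V) ∘L B ∘L adjoint (S ∘L V) := by
    rw [adjoint_comp, hSsa]; rfl
  rw [← hgram] at hB₁ hB₂
  have hP := isStarProjection_comp_comp_adjoint_of_mul_eq_one (S ∘L V) B hB₁ hB₂
  rw [hQ]
  exact ⟨hP.isSelfAdjoint, hP.isIdempotentElem⟩

open ContinuousLinearMap in
/-- With `A` positive on `H`, `V* V = 1` and `μ > 0`, the operator
`Q = (A + μI)^{1/2} ∘ V ∘ (V* A V + μI)⁻¹ ∘ V* ∘ (A + μI)^{1/2}` is an orthogonal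
projection, i.e. self-adjoint and idempotent.  Here `S` denotes the unique positive
square root of `A + μI` and `B` the (unique two-sided) inverse of `V* A V + μI`. -/
theorem nystrom_Q_is_orthogonal_projection
    {H G : Type*} [NormedAddCommGroup H] [InnerProductSpace ℂ H] [CompleteSpace H]
    [NormedAddCommGroup G] [InnerProductSpace ℂ G] [CompleteSpace G]
    (A : H →L[ℂ] H) (hA : A.IsPositive)
    (V : G →L[ℂ] H) (hV : adjoint V ∘L V = 1)
    (μ : ℝ) (hμ : 0 < μ)
    (S : H →L[ℂ] H) (hS : S.IsPositive) (hS2 : S * S = A + (μ : ℂ) • 1) :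
    ∀ B : G →L[ℂ] G,
      (adjoint V ∘L A ∘L V + (μ : ℂ) • 1) * B = 1 →
      B * (adjoint V ∘L A ∘L V + (μ : ℂ) • 1) = 1 →
      IsSelfAdjoint (S * (V ∘L B ∘L adjoint V) * S) ∧
        (S * (V ∘L B ∘L adjoint V) * S) * (S * (V ∘L B ∘L adjoint V) * S)
          = S * (V ∘L B ∘L adjoint V) * S :=
  nystrom_Q_is_orthogonal_projection_general A V hV μ S hS hS2
end

section
/- Let α > 1, β > 1 and q ≥ α/β. Then there exists a constant c > 0 such that for every λ > 0, the series ∑_{i=1}^∞ i^{-α}/(i^{-β} + λ)^q converges and ∑_{i=1}^∞ i^{-α}/(i^{-β} + λ)^q ≤ c · λ^{-(1 + βq - α)/β}. -/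
open Finset Real

private lemma tail_sum_le' {α : ℝ} (hα : 1 < α) (N : ℕ) (hN : 1 ≤ N) (M : ℕ) :
    ∑ n ∈ Finset.Ioc N M, (n : ℝ) ^ (-α) ≤ (N : ℝ) ^ (1 - α) / (α - 1) := by
  have hN0 : (0:ℝ) < N := by exact_mod_cast hN
  have hα1 : (0:ℝ) < α - 1 := by linarith
  rcases le_or_gt M N with h | h
  · rw [Finset.Ioc_eq_empty (by omega)]
    simp only [Finset.sum_empty]
    positivity
  · have hM0 : (0:ℝ) < M := by
      have : (N:ℝ) < M := by exact_mod_cast h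
      linarith
    have hNM : (N:ℝ) ≤ M := by exact_mod_cast h.le
    have hanti : AntitoneOn (fun x : ℝ => x ^ (-α)) (Set.Icc (N:ℝ) M) := by
      intro x hx y hy hxy
      exact Real.rpow_le_rpow_of_nonpos (lt_of_lt_of_le hN0 hx.1) hxy (by linarith)
    have key := AntitoneOn.sum_le_integral_Ico h.le hanti
    have hsum : ∑ n ∈ Finset.Ioc N M, (n : ℝ) ^ (-α)
        = ∑ i ∈ Finset.Ico N M, (((i + 1 : ℕ)) : ℝ) ^ (-α) := by
      rw [← Finset.Ico_add_one_add_one_eq_Ioc,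
        ← Finset.map_add_right_Ico N M 1, Finset.sum_map]
      rfl
    have hint : ∫ x in (N:ℝ)..(M:ℝ), x ^ (-α)
        = ((M:ℝ) ^ (-α + 1) - (N:ℝ) ^ (-α + 1)) / (-α + 1) := by
      apply integral_rpow
      refine Or.inr ⟨by linarith, ?_⟩
      exact Set.notMem_uIcc_of_lt hN0 hM0
    have hBnn : 0 ≤ (M:ℝ) ^ (-α + 1) := Real.rpow_nonneg hM0.le _
    calc ∑ n ∈ Finset.Ioc N M, (n : ℝ) ^ (-α)
        ≤ ∫ x in (N:ℝ)..(M:ℝ), x ^ (-α) := by rw [hsum]; exact key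
      _ = ((M:ℝ) ^ (-α + 1) - (N:ℝ) ^ (-α + 1)) / (-α + 1) := hint
      _ = ((N:ℝ) ^ (-α + 1) - (M:ℝ) ^ (-α + 1)) / (α - 1) := by
          rw [← neg_div_neg_eq]; ring_nf
      _ ≤ (N:ℝ) ^ (-α + 1) / (α - 1) := by
          gcongr
          linarith
      _ = (N:ℝ) ^ (1 - α) / (α - 1) := by ring_nf

private lemma sum_S_le {α : ℝ} (hα : 1 < α) (M : ℕ) :
    ∑ n ∈ Finset.Ioc 0 M, (n : ℝ) ^ (-α) ≤ 1 + 1 / (α - 1) := by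
  have hα1 : (0:ℝ) < α - 1 := by linarith
  rcases Nat.eq_zero_or_pos M with rfl | hM
  · simp; positivity
  · have hsplit := Finset.sum_Ioc_consecutive (fun n : ℕ => (n : ℝ) ^ (-α))
      (Nat.zero_le 1) hM
    rw [← hsplit]
    have h1 : ∑ n ∈ Finset.Ioc (0:ℕ) 1, (n : ℝ) ^ (-α) = 1 := by
      have : Finset.Ioc (0:ℕ) 1 = {1} := rfl
      simp [this]
    rw [h1]
    have := tail_sum_le' hα 1 le_rfl M
    simp only [Nat.cast_one, Real.one_rpow] at this
    linarith

/-- for `α > 1`, `β > 1` and `q ≥ α/β` there is a constant `c > 0` such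
that for every `λ > 0` the series `∑_{i≥1} i^{-α}/(i^{-β} + λ)^q` converges and is
bounded by `c · λ^{-(1 + βq - α)/β}`. -/
theorem series_sum_bound (α β q : ℝ) (hα : 1 < α) (hβ : 1 < β) (hq : α / β ≤ q) :
    ∃ c > (0 : ℝ), ∀ lam : ℝ, 0 < lam →
      Summable (fun i : ℕ+ => (i : ℝ) ^ (-α) / ((i : ℝ) ^ (-β) + lam) ^ q) ∧
      ∑' i : ℕ+, (i : ℝ) ^ (-α) / ((i : ℝ) ^ (-β) + lam) ^ q
        ≤ c * lam ^ (-(1 + β * q - α) / β) := by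
  have hβ0 : (0:ℝ) < β := by linarith
  have hq0 : 0 < q := lt_of_lt_of_le (div_pos (by linarith) hβ0) hq
  have hβq : α ≤ β * q := by
    have := (div_le_iff₀ hβ0).mp hq
    linarith
  have hα1 : (0:ℝ) < α - 1 := by linarith
  set c : ℝ := 2 ^ (1 + β * q - α) + 1 / (α - 1) + (1 + 1 / (α - 1)) with hc
  have hc0 : 0 < c := by positivity
  refine ⟨c, hc0, fun lam hlam => ?_⟩
  set g : ℕ → ℝ := fun n => (n:ℝ) ^ (-α) / ((n:ℝ) ^ (-β) + lam) ^ q with hgdef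
  have hg0 : ∀ n : ℕ, 0 ≤ g n := by
    intro n
    have h0 : (0:ℝ) ≤ (n:ℝ) := n.cast_nonneg
    have h1 : (0:ℝ) ≤ (n:ℝ) ^ (-α) := Real.rpow_nonneg h0 _
    have h2 : (0:ℝ) ≤ ((n:ℝ) ^ (-β) + lam) ^ q :=
      Real.rpow_nonneg (by positivity) _
    exact div_nonneg h1 h2
  have h1 : ∀ n : ℕ, 1 ≤ n → g n ≤ (n:ℝ) ^ (β * q - α) := by
    intro n hn
    have hx : (0:ℝ) < (n:ℝ) := by exact_mod_cast hn
    have hb : (0:ℝ) < (n:ℝ) ^ (-β) := Real.rpow_pos_of_pos hx _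
    have hmono : (n:ℝ) ^ ((-β) * q) ≤ ((n:ℝ) ^ (-β) + lam) ^ q := by
      rw [Real.rpow_mul hx.le]
      exact Real.rpow_le_rpow hb.le (by linarith) hq0.le
    have hstep : g n ≤ (n:ℝ) ^ (-α) / (n:ℝ) ^ ((-β) * q) :=
      div_le_div_of_nonneg_left (Real.rpow_nonneg hx.le _) (Real.rpow_pos_of_pos hx _) hmono
    calc g n ≤ (n:ℝ) ^ (-α) / (n:ℝ) ^ ((-β) * q) := hstep
      _ = (n:ℝ) ^ (β * q - α) := by
          rw [← Real.rpow_sub hx]; ring_nf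
  have h2 : ∀ n : ℕ, 1 ≤ n → g n ≤ lam ^ (-q) * (n:ℝ) ^ (-α) := by
    intro n hn
    have hx : (0:ℝ) < (n:ℝ) := by exact_mod_cast hn
    have hb : (0:ℝ) < (n:ℝ) ^ (-β) := Real.rpow_pos_of_pos hx _
    have hmono : lam ^ q ≤ ((n:ℝ) ^ (-β) + lam) ^ q :=
      Real.rpow_le_rpow hlam.le (by linarith) hq0.le
    have hstep : g n ≤ (n:ℝ) ^ (-α) / lam ^ q :=
      div_le_div_of_nonneg_left (Real.rpow_nonneg hx.le _) (Real.rpow_pos_of_pos hlam _) hmono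
    calc g n ≤ (n:ℝ) ^ (-α) / lam ^ q := hstep
      _ = lam ^ (-q) * (n:ℝ) ^ (-α) := by
          rw [Real.rpow_neg hlam.le, div_eq_mul_inv, mul_comm]
  have key : ∀ s : Finset ℕ+, ∑ i ∈ s, g (i:ℕ) ≤ c * lam ^ (-(1 + β * q - α) / β) := by
    intro s
    classical
    set M := s.sup (fun i : ℕ+ => (i:ℕ)) with hMdef
    have himg : ∑ i ∈ s, g (i:ℕ) = ∑ n ∈ s.image (fun i : ℕ+ => (i:ℕ)), g n :=
      (Finset.sum_image (fun a _ b _ h => PNat.coe_injective h)).symm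
    have hsub : s.image (fun i : ℕ+ => (i:ℕ)) ⊆ Finset.Ioc 0 M := by
      intro n hn
      rcases Finset.mem_image.mp hn with ⟨i, hi, rfl⟩
      exact Finset.mem_Ioc.mpr ⟨i.pos, Finset.le_sup hi⟩
    have hstep : ∑ i ∈ s, g (i:ℕ) ≤ ∑ n ∈ Finset.Ioc 0 M, g n := by
      rw [himg]
      exact Finset.sum_le_sum_of_subset_of_nonneg hsub (fun n _ _ => hg0 n)
    have hpow : 0 < lam ^ (-(1 + β * q - α) / β) := Real.rpow_pos_of_pos hlam _
    rcases le_or_gt lam 1 with hl1 | hl1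
    · -- case lam ≤ 1
      set L : ℝ := lam ^ (-1/β) with hL
      have hz : (-1/β : ℝ) ≤ 0 := by
        rw [neg_div]
        exact neg_nonpos.mpr (by positivity)
      have hL0 : 0 < L := Real.rpow_pos_of_pos hlam _
      have hL1 : 1 ≤ L := by
        have := Real.rpow_le_rpow_of_nonpos hlam hl1 hz
        rwa [Real.one_rpow] at this
      set N : ℕ := ⌈L⌉₊ with hNdef
      have hN1 : 1 ≤ N := Nat.one_le_ceil_iff.mpr hL0
      have hLN : L ≤ (N:ℝ) := Nat.le_ceil L
      have hN2L : (N:ℝ) ≤ 2 * L := by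
        have := Nat.ceil_lt_add_one hL0.le
        linarith
      have hNpos : (0:ℝ) < N := by exact_mod_cast hN1
      set M' := max M N with hM'
      have hstep2 : ∑ n ∈ Finset.Ioc 0 M, g n ≤ ∑ n ∈ Finset.Ioc 0 M', g n :=
        Finset.sum_le_sum_of_subset_of_nonneg
          (Finset.Ioc_subset_Ioc le_rfl (le_max_left _ _)) (fun n _ _ => hg0 n)
      have hsplit := Finset.sum_Ioc_consecutive g (Nat.zero_le N) (le_max_right M N)
      have hhead : ∑ n ∈ Finset.Ioc 0 N, g n ≤ (N:ℝ) ^ (1 + β*q - α) := by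
        have hb : ∀ n ∈ Finset.Ioc 0 N, g n ≤ (N:ℝ) ^ (β*q - α) := by
          intro n hn
          rcases Finset.mem_Ioc.mp hn with ⟨hn0, hnN⟩
          refine (h1 n hn0).trans ?_
          exact Real.rpow_le_rpow (Nat.cast_nonneg n) (by exact_mod_cast hnN) (by linarith)
        calc ∑ n ∈ Finset.Ioc 0 N, g n ≤ (Finset.Ioc 0 N).card • ((N:ℝ) ^ (β*q - α)) :=
            Finset.sum_le_card_nsmul _ _ _ hb
          _ = (N:ℝ) * (N:ℝ) ^ (β*q-α) := by
              rw [Nat.card_Ioc, Nat.sub_zero, nsmul_eq_mul]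
          _ = (N:ℝ) ^ (1 + β*q - α) := by
              rw [show (1 + β*q - α) = 1 + (β*q - α) by ring, Real.rpow_add hNpos,
                Real.rpow_one]
      have hheadL : (N:ℝ) ^ (1+β*q-α) ≤ 2 ^ (1+β*q-α) * lam ^ (-(1+β*q-α)/β) := by
        have h2L : (N:ℝ) ^ (1+β*q-α) ≤ (2*L) ^ (1+β*q-α) :=
          Real.rpow_le_rpow (Nat.cast_nonneg N) hN2L (by linarith)
        have hmul : (2*L) ^ (1+β*q-α) = 2 ^ (1+β*q-α) * L ^ (1+β*q-α) :=
          Real.mul_rpow (by norm_num) hL0.le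
        have hLe : L ^ (1+β*q-α) = lam ^ (-(1+β*q-α)/β) := by
          rw [hL, ← Real.rpow_mul hlam.le]
          congr 1
          field_simp
        calc (N:ℝ) ^ (1+β*q-α) ≤ (2*L) ^ (1+β*q-α) := h2L
          _ = 2 ^ (1+β*q-α) * L ^ (1+β*q-α) := hmul
          _ = 2 ^ (1+β*q-α) * lam ^ (-(1+β*q-α)/β) := by rw [hLe]
      have htail : ∑ n ∈ Finset.Ioc N M', g n ≤ lam ^ (-q) * ((N:ℝ) ^ (1-α) / (α-1)) := by
        calc ∑ n ∈ Finset.Ioc N M', g n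
            ≤ ∑ n ∈ Finset.Ioc N M', lam ^ (-q) * (n:ℝ)^(-α) := by
              apply Finset.sum_le_sum
              intro n hn
              exact h2 n (le_trans hN1 (Finset.mem_Ioc.mp hn).1.le)
          _ = lam ^ (-q) * ∑ n ∈ Finset.Ioc N M', (n:ℝ)^(-α) := by rw [Finset.mul_sum]
          _ ≤ lam ^ (-q) * ((N:ℝ)^(1-α)/(α-1)) :=
              mul_le_mul_of_nonneg_left (tail_sum_le' hα N hN1 M')
                (Real.rpow_nonneg hlam.le _)
      have htailL : lam ^ (-q) * ((N:ℝ)^(1-α)/(α-1))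
          ≤ (1/(α-1)) * lam ^ (-(1+β*q-α)/β) := by
        have hNL' : (N:ℝ)^(1-α) ≤ L^(1-α) :=
          Real.rpow_le_rpow_of_nonpos hL0 hLN (by linarith)
        have hLe2 : lam ^ (-q) * L^(1-α) = lam ^ (-(1+β*q-α)/β) := by
          rw [hL, ← Real.rpow_mul hlam.le, ← Real.rpow_add hlam]
          congr 1
          field_simp
          ring
        have step1 : lam^(-q) * ((N:ℝ)^(1-α)/(α-1)) ≤ lam^(-q) * (L^(1-α)/(α-1)) :=
          mul_le_mul_of_nonneg_left (div_le_div_of_nonneg_right hNL' hα1.le)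
            (Real.rpow_nonneg hlam.le _)
        have step2 : lam^(-q) * (L^(1-α)/(α-1)) = (1/(α-1)) * (lam^(-q) * L^(1-α)) := by ring
        rw [step2, hLe2] at step1
        exact step1
      have hco : 2 ^ (1+β*q-α) + 1/(α-1) ≤ c := by
        have : (0:ℝ) ≤ 1 + 1/(α-1) := by positivity
        rw [hc]; linarith
      calc ∑ i ∈ s, g (i:ℕ) ≤ ∑ n ∈ Finset.Ioc 0 M', g n := hstep.trans hstep2
        _ = ∑ n ∈ Finset.Ioc 0 N, g n + ∑ n ∈ Finset.Ioc N M', g n := hsplit.symm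
        _ ≤ 2^(1+β*q-α) * lam^(-(1+β*q-α)/β) + (1/(α-1)) * lam^(-(1+β*q-α)/β) :=
            add_le_add (hhead.trans hheadL) (htail.trans htailL)
        _ = (2^(1+β*q-α) + 1/(α-1)) * lam^(-(1+β*q-α)/β) := by ring
        _ ≤ c * lam^(-(1+β*q-α)/β) := mul_le_mul_of_nonneg_right hco hpow.le
    · -- case 1 < lam
      have hsum2 : ∑ n ∈ Finset.Ioc 0 M, g n ≤ lam^(-q) * (1 + 1/(α-1)) := by
        calc ∑ n ∈ Finset.Ioc 0 M, g n
            ≤ ∑ n ∈ Finset.Ioc 0 M, lam^(-q) * (n:ℝ)^(-α) :=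
              Finset.sum_le_sum (fun n hn => h2 n (Finset.mem_Ioc.mp hn).1)
          _ = lam^(-q) * ∑ n ∈ Finset.Ioc 0 M, (n:ℝ)^(-α) := by rw [Finset.mul_sum]
          _ ≤ lam^(-q) * (1 + 1/(α-1)) :=
              mul_le_mul_of_nonneg_left (sum_S_le hα M) (Real.rpow_nonneg hlam.le _)
      have hexp : lam ^ (-q) ≤ lam ^ (-(1+β*q-α)/β) := by
        apply Real.rpow_le_rpow_of_exponent_le hl1.le
        rw [neg_div, neg_le_neg_iff, div_le_iff₀ hβ0]
        nlinarith
      have hco2 : 1 + 1/(α-1) ≤ c := by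
        have h2e : (0:ℝ) < 2 ^ (1+β*q-α) := by positivity
        have : (0:ℝ) ≤ 1/(α-1) := by positivity
        rw [hc]; linarith
      calc ∑ i ∈ s, g (i:ℕ) ≤ lam^(-q) * (1+1/(α-1)) := hstep.trans hsum2
        _ ≤ lam^(-(1+β*q-α)/β) * (1+1/(α-1)) :=
            mul_le_mul_of_nonneg_right hexp (by positivity)
        _ = (1+1/(α-1)) * lam^(-(1+β*q-α)/β) := by ring
        _ ≤ c * lam^(-(1+β*q-α)/β) := mul_le_mul_of_nonneg_right hco2 hpow.le
  have heq : (fun i : ℕ+ => (i : ℝ) ^ (-α) / ((i : ℝ) ^ (-β) + lam) ^ q)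
      = fun i : ℕ+ => g (i:ℕ) := rfl
  have hsummable : Summable (fun i : ℕ+ => g (i:ℕ)) :=
    summable_of_sum_le (fun i => hg0 _) key
  rw [heq]
  exact ⟨hsummable, Summable.tsum_le_of_sum_le hsummable key⟩
end

section
/- Let b > 1 and let (τ_i)_{i≥1} be a sequence of positive real numbers for which there exist constants c₁, c₂ > 0 with c₁ · i^{-b} ≤ τ_i ≤ c₂ · i^{-b} for all positive integers i. Then there exists a constant c > 0 such that for every λ > 0, ∑_{i=1}^∞ τ_i/(τ_i + λ) ≤ c · λ^{-1/b}. -/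
open Filter Finset

private lemma step_ineq (b : ℝ) (hb : 1 < b) {x : ℝ} (hx : 1 ≤ x) :
    (b - 1) * (x + 1) ^ (-b) ≤ x ^ (1 - b) - (x + 1) ^ (1 - b) := by
  have hq : 0 < b - 1 := by linarith
  have hx1 : (0:ℝ) < x + 1 := by linarith
  set q := b - 1 with hqdef
  set t := 1 / (x + 1) with htdef
  have ht0 : 0 < t := by positivity
  have ht1 : t < 1 := by
    rw [htdef, div_lt_one hx1]; linarith
  have h1t : 0 < 1 - t := by linarith
  -- key : 1 + q*t ≤ (1-t)^(-q)
  have hlog : Real.log (1 - t) ≤ -t := by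
    have := Real.log_le_sub_one_of_pos h1t; linarith
  have h2 : (1 - t) ^ q ≤ Real.exp (-(q * t)) := by
    rw [Real.rpow_def_of_pos h1t]
    apply Real.exp_le_exp.2
    nlinarith
  have h3 : 1 + q * t ≤ Real.exp (q * t) := by
    have := Real.add_one_le_exp (q * t); linarith
  have hpow_pos : 0 < (1 - t) ^ q := Real.rpow_pos_of_pos h1t q
  have hexp_pos : 0 < Real.exp (q * t) := Real.exp_pos _
  have hprod : (1 - t) ^ q * (1 + q * t) ≤ 1 := by
    calc (1 - t) ^ q * (1 + q * t) ≤ Real.exp (-(q * t)) * Real.exp (q * t) := by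
          apply mul_le_mul h2 h3 (by positivity) (by positivity)
      _ = 1 := by rw [← Real.exp_add]; simp
  have key : 1 + q * t ≤ (1 - t) ^ (-q) := by
    rw [Real.rpow_neg h1t.le, ← one_div, le_div_iff₀ hpow_pos]
    nlinarith
  -- x = (1-t)*(x+1)
  have hxe : (1 - t) * (x + 1) = x := by
    rw [htdef]; field_simp; ring
  have hsplit : x ^ (-q) = (1 - t) ^ (-q) * (x + 1) ^ (-q) := by
    calc x ^ (-q) = ((1 - t) * (x + 1)) ^ (-q) := by rw [hxe]
      _ = (1 - t) ^ (-q) * (x + 1) ^ (-q) := Real.mul_rpow h1t.le hx1.le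
  have h4 : (1 + q * t) * (x + 1) ^ (-q) ≤ x ^ (-q) := by
    rw [hsplit]
    exact mul_le_mul_of_nonneg_right key (Real.rpow_nonneg hx1.le _)
  have ht_pow : t * (x + 1) ^ (-q) = (x + 1) ^ (-b) := by
    have : (x + 1) ^ (-b) = (x + 1) ^ (-q) * (x + 1) ^ (-(1:ℝ)) := by
      rw [← Real.rpow_add hx1]; ring_nf; rw [hqdef]; ring_nf
    rw [this, Real.rpow_neg_one]
    rw [htdef]; ring
  have hexp1 : (1:ℝ) - b = -q := by rw [hqdef]; ring
  rw [hexp1]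
  nlinarith [h4, ht_pow]

private lemma tail_bound (b : ℝ) (hb : 1 < b) (N : ℕ) (hN : 1 ≤ N) :
    Summable (fun n : ℕ => ((N : ℝ) + n + 1) ^ (-b)) ∧
    ∑' n : ℕ, ((N : ℝ) + n + 1) ^ (-b) ≤ (N : ℝ) ^ (1 - b) / (b - 1) := by
  have hq : 0 < b - 1 := by linarith
  have hN1 : (1:ℝ) ≤ (N : ℝ) := by exact_mod_cast hN
  set g : ℕ → ℝ := fun n => ((N : ℝ) + n) ^ (1 - b) / (b - 1) with hg
  have hgnonneg : ∀ n, 0 ≤ g n := by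
    intro n
    apply div_nonneg (Real.rpow_nonneg (by positivity) _) hq.le
  have hd : ∀ n : ℕ, ((N : ℝ) + n + 1) ^ (-b) ≤ g n - g (n + 1) := by
    intro n
    have hx : (1:ℝ) ≤ (N : ℝ) + n := by
      have : (0:ℝ) ≤ (n : ℝ) := Nat.cast_nonneg n
      linarith
    have hstep := step_ineq b hb hx
    have hg0 : g n = ((N : ℝ) + n) ^ (1 - b) / (b - 1) := rfl
    have hg1 : g (n + 1) = ((N : ℝ) + n + 1) ^ (1 - b) / (b - 1) := by
      show ((N : ℝ) + (n + 1 : ℕ)) ^ (1 - b) / (b - 1) = _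
      push_cast; ring_nf
    rw [hg0, hg1, ← sub_div, le_div_iff₀ hq]
    linarith [hstep]
  have hd0 : ∀ n : ℕ, (0:ℝ) ≤ ((N : ℝ) + n + 1) ^ (-b) :=
    fun n => Real.rpow_nonneg (by positivity) _
  have hdnn : ∀ n, 0 ≤ g n - g (n + 1) := fun n => le_trans (hd0 n) (hd n)
  have hsums : ∀ n : ℕ, ∑ i ∈ range n, (g i - g (i + 1)) = g 0 - g n :=
    fun n => Finset.sum_range_sub' g n
  have hdsum : Summable (fun n => g n - g (n + 1)) := by
    apply summable_of_sum_range_le (c := g 0) hdnn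
    intro n
    rw [hsums n]
    have := hgnonneg n
    linarith
  have hglim : Tendsto g atTop (nhds 0) := by
    have h1 : Tendsto (fun n : ℕ => (N : ℝ) + n) atTop atTop := by
      apply tendsto_atTop_add_const_left
      exact tendsto_natCast_atTop_atTop
    have h2 : Tendsto (fun x : ℝ => x ^ (1 - b)) atTop (nhds 0) := by
      have : (1:ℝ) - b = -(b - 1) := by ring
      rw [this]
      exact tendsto_rpow_neg_atTop hq
    have h3 := (h2.comp h1).div_const (b - 1)
    simpa using h3
  have hdha : HasSum (fun n => g n - g (n + 1)) (g 0) := by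
    rw [hdsum.hasSum_iff_tendsto_nat]
    simp only [hsums]
    have := Filter.Tendsto.const_sub (g 0) hglim
    simpa using this
  have hdtsum : ∑' n, (g n - g (n + 1)) = g 0 := hdha.tsum_eq
  have hsummable : Summable (fun n : ℕ => ((N : ℝ) + n + 1) ^ (-b)) :=
    Summable.of_nonneg_of_le hd0 hd hdsum
  refine ⟨hsummable, ?_⟩
  calc ∑' n : ℕ, ((N : ℝ) + n + 1) ^ (-b) ≤ ∑' n, (g n - g (n + 1)) :=
        Summable.tsum_le_tsum hd hsummable hdsum
    _ = g 0 := hdtsum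
    _ = (N : ℝ) ^ (1 - b) / (b - 1) := by rw [hg]; norm_num

/-- if `b > 1` and `(τ_i)_{i≥1}` are positive reals with
`c₁ i^{-b} ≤ τ_i ≤ c₂ i^{-b}`, then there is `c > 0` such that for every `λ > 0`
the effective-dimension sum `∑_{i≥1} τ_i/(τ_i + λ)` converges and is at most
`c · λ^{-1/b}`. -/
theorem effective_dimension_bound (b : ℝ) (hb : 1 < b)
    (τ : ℕ+ → ℝ) (hτpos : ∀ i, 0 < τ i)
    (c₁ c₂ : ℝ) (hc₁ : 0 < c₁) (hc₂ : 0 < c₂)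
    (hlow : ∀ i : ℕ+, c₁ * (i : ℝ) ^ (-b) ≤ τ i)
    (hup : ∀ i : ℕ+, τ i ≤ c₂ * (i : ℝ) ^ (-b)) :
    ∃ c > (0 : ℝ), ∀ lam : ℝ, 0 < lam →
      Summable (fun i : ℕ+ => τ i / (τ i + lam)) ∧
      ∑' i : ℕ+, τ i / (τ i + lam) ≤ c * lam ^ (-(1 / b)) := by
  have hb0 : (0:ℝ) < b := by linarith
  have hq : (0:ℝ) < b - 1 := by linarith
  have hZsum : Summable (fun n : ℕ => ((n : ℝ) + 1) ^ (-b)) := by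
    have h := (Real.summable_nat_rpow (p := -b)).2 (by linarith)
    have h2 := (summable_nat_add_iff (f := fun n : ℕ => (n : ℝ) ^ (-b)) 1).2 h
    refine h2.congr fun n => ?_
    push_cast
    ring_nf
  set Z := ∑' n : ℕ, ((n : ℝ) + 1) ^ (-b) with hZdef
  have hZ0 : 0 ≤ Z := tsum_nonneg fun n => Real.rpow_nonneg (by positivity) _
  refine ⟨(Z + 2 + 1 / (b - 1)) * c₂ ^ (1 / b), by positivity, ?_⟩
  intro lam hlam
  set a := c₂ / lam with ha
  have ha0 : 0 < a := by positivity
  set f : ℕ → ℝ := fun n => τ n.succPNat / (τ n.succPNat + lam) with hf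
  have hcoe : ∀ n : ℕ, ((n.succPNat : ℕ+) : ℝ) = (n : ℝ) + 1 := by
    intro n
    have : ((n.succPNat : ℕ+) : ℕ) = n + 1 := Nat.succPNat_coe n
    exact_mod_cast congrArg (Nat.cast : ℕ → ℝ) this
  have hden : ∀ i : ℕ+, 0 < τ i + lam := fun i => by
    have := hτpos i; linarith
  have hf0 : ∀ n, 0 ≤ f n := fun n =>
    div_nonneg (hτpos _).le (hden _).le
  have hf1 : ∀ n, f n ≤ 1 := fun n => by
    rw [div_le_one (hden _)]
    linarith
  have hfle : ∀ n, f n ≤ a * ((n : ℝ) + 1) ^ (-b) := by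
    intro n
    have h1 : f n ≤ τ n.succPNat / lam := by
      apply div_le_div_of_nonneg_left (hτpos _).le hlam
      linarith [hτpos n.succPNat]
    have h2 : τ n.succPNat / lam ≤ c₂ * ((n : ℝ) + 1) ^ (-b) / lam := by
      have hc : τ n.succPNat ≤ c₂ * ((n : ℝ) + 1) ^ (-b) := by
        have := hup n.succPNat
        rwa [hcoe n] at this
      gcongr
    calc f n ≤ c₂ * ((n : ℝ) + 1) ^ (-b) / lam := le_trans h1 h2
      _ = a * ((n : ℝ) + 1) ^ (-b) := by rw [ha]; ring
  have hfsum : Summable f := Summable.of_nonneg_of_le hf0 hfle (hZsum.mul_left a)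
  have hFsum : Summable (fun i : ℕ+ => τ i / (τ i + lam)) := by
    rw [← (Equiv.pnatEquivNat.symm).summable_iff]
    exact hfsum.congr fun n => rfl
  have htsum_eq : ∑' i : ℕ+, τ i / (τ i + lam) = ∑' n : ℕ, f n := by
    rw [← (Equiv.pnatEquivNat.symm).tsum_eq (fun i : ℕ+ => τ i / (τ i + lam))]
    exact tsum_congr fun _ => rfl
  refine ⟨hFsum, ?_⟩
  rw [htsum_eq]
  have hA : a ^ (1 / b) = c₂ ^ (1 / b) * lam ^ (-(1 / b)) := by
    rw [ha, Real.div_rpow hc₂.le hlam.le, Real.rpow_neg hlam.le, div_eq_mul_inv]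
  have haroot0 : 0 < a ^ (1 / b) := Real.rpow_pos_of_pos ha0 _
  have main : ∑' n, f n ≤ (Z + 2 + 1 / (b - 1)) * a ^ (1 / b) := by
    by_cases hcase : a ≤ 1
    · have hstep : a ≤ a ^ (1 / b) := by
        have := Real.rpow_le_rpow_of_exponent_ge ha0 hcase
          (show 1 / b ≤ 1 by rw [div_le_one hb0]; linarith)
        rwa [Real.rpow_one] at this
      calc ∑' n, f n ≤ ∑' n : ℕ, a * ((n : ℝ) + 1) ^ (-b) :=
            Summable.tsum_le_tsum hfle hfsum (hZsum.mul_left a)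
        _ = a * Z := tsum_mul_left
        _ ≤ (Z + 2 + 1 / (b - 1)) * a ^ (1 / b) := by
            have h1 : a * Z ≤ a ^ (1 / b) * Z := mul_le_mul_of_nonneg_right hstep hZ0
            have h2 : a ^ (1 / b) * Z ≤ a ^ (1 / b) * (Z + 2 + 1 / (b - 1)) := by
              apply mul_le_mul_of_nonneg_left ?_ haroot0.le
              · have : 0 < 1 / (b - 1) := by positivity
                linarith
            linarith [h1, h2, mul_comm (a ^ (1 / b)) (Z + 2 + 1 / (b - 1))]
    · push_neg at hcase
      have haroot : 1 ≤ a ^ (1 / b) := by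
        have := Real.rpow_le_rpow (by norm_num : (0:ℝ) ≤ 1) hcase.le
          (by positivity : (0:ℝ) ≤ 1 / b)
        rwa [Real.one_rpow] at this
      set N := ⌈a ^ (1 / b)⌉₊ with hNdef
      have hN1 : 1 ≤ N := by
        rw [hNdef, Nat.one_le_iff_ne_zero, ← Nat.pos_iff_ne_zero, Nat.ceil_pos]
        positivity
      have hNge : a ^ (1 / b) ≤ (N : ℝ) := Nat.le_ceil _
      have hNle : (N : ℝ) ≤ a ^ (1 / b) + 1 := (Nat.ceil_lt_add_one haroot0.le).le
      obtain ⟨htailsum, htailbd⟩ := tail_bound b hb N hN1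
      have hsplit := Summable.sum_add_tsum_nat_add (f := f) N hfsum
      have hhead : ∑ i ∈ range N, f i ≤ (N : ℝ) := by
        calc ∑ i ∈ range N, f i ≤ ∑ _i ∈ range N, (1:ℝ) :=
              Finset.sum_le_sum fun i _ => hf1 i
          _ = (N : ℝ) := by simp
      have htshift : ∀ n : ℕ, f (n + N) ≤ a * ((N : ℝ) + n + 1) ^ (-b) := by
        intro n
        have := hfle (n + N)
        have hc : ((n + N : ℕ) : ℝ) + 1 = (N : ℝ) + n + 1 := by push_cast; ring
        rwa [hc] at this
      have hshiftsum : Summable (fun n => f (n + N)) :=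
        (summable_nat_add_iff N).2 hfsum
      have htail : ∑' n, f (n + N) ≤ a * ((N : ℝ) ^ (1 - b) / (b - 1)) := by
        calc ∑' n, f (n + N) ≤ ∑' n : ℕ, a * ((N : ℝ) + n + 1) ^ (-b) :=
              Summable.tsum_le_tsum htshift hshiftsum (htailsum.mul_left a)
          _ = a * ∑' n : ℕ, ((N : ℝ) + n + 1) ^ (-b) := tsum_mul_left
          _ ≤ a * ((N : ℝ) ^ (1 - b) / (b - 1)) :=
              mul_le_mul_of_nonneg_left htailbd ha0.le
      have hNpow : (N : ℝ) ^ (1 - b) ≤ (a ^ (1 / b)) ^ (1 - b) :=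
        Real.rpow_le_rpow_of_nonpos haroot0 hNge (by linarith)
      have hcomb : a * (a ^ (1 / b)) ^ (1 - b) = a ^ (1 / b) := by
        rw [← Real.rpow_mul ha0.le]
        rw [show a * a ^ (1 / b * (1 - b)) = a ^ (1:ℝ) * a ^ (1 / b * (1 - b)) by
          rw [Real.rpow_one]]
        rw [← Real.rpow_add ha0]
        congr 1
        field_simp
        ring
      have htail2 : ∑' n, f (n + N) ≤ a ^ (1 / b) / (b - 1) := by
        calc ∑' n, f (n + N) ≤ a * ((N : ℝ) ^ (1 - b) / (b - 1)) := htail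
          _ ≤ a * ((a ^ (1 / b)) ^ (1 - b) / (b - 1)) := by
              apply mul_le_mul_of_nonneg_left ?_ ha0.le
              · gcongr
          _ = a * (a ^ (1 / b)) ^ (1 - b) / (b - 1) := by ring
          _ = a ^ (1 / b) / (b - 1) := by rw [hcomb]
      calc ∑' n, f n = ∑ i ∈ range N, f i + ∑' n, f (n + N) := hsplit.symm
        _ ≤ (N : ℝ) + a ^ (1 / b) / (b - 1) := add_le_add hhead htail2
        _ ≤ (a ^ (1 / b) + 1) + a ^ (1 / b) / (b - 1) := by linarith
        _ ≤ (Z + 2 + 1 / (b - 1)) * a ^ (1 / b) := by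
            have h1 : a ^ (1 / b) / (b - 1) ≤ a ^ (1 / b) * (1 / (b - 1)) :=
              le_of_eq (by ring)
            have h2 : (1:ℝ) ≤ a ^ (1 / b) := haroot
            have h3 : 0 < 1 / (b - 1) := by positivity
            nlinarith [hZ0]
  calc ∑' n, f n ≤ (Z + 2 + 1 / (b - 1)) * a ^ (1 / b) := main
    _ = (Z + 2 + 1 / (b - 1)) * c₂ ^ (1 / b) * lam ^ (-(1 / b)) := by
        rw [hA]; ring
end

section
/- Let A and Â be positive bounded linear operators on a complex Hilbert space H and let λ > 0. If ‖(Â − A) ∘ (A + λI)^{-1}‖ ≤ 1/2, then ‖(A + λI)^{1/2} ∘ ((Â + λI)^{1/2})^{-1}‖ ≤ √2 and ‖(Â + λI)^{1/2} ∘ ((A + λI)^{1/2})^{-1}‖ ≤ √(3/2). -/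
open scoped ENNReal NNReal

lemma spectralRadius_mul_swap {A : Type*} [NormedRing A] [NormedAlgebra ℂ A]
    (a b : A) : spectralRadius ℂ (a * b) = spectralRadius ℂ (b * a) := by
  have h := spectrum.nonzero_mul_comm (𝕜 := ℂ) a b
  unfold spectralRadius
  apply le_antisymm
  · refine iSup₂_le fun k hk => ?_
    rcases eq_or_ne k 0 with rfl | h0
    · simp
    · have : k ∈ spectrum ℂ (b * a) \ {0} := h ▸ ⟨hk, h0⟩
      exact le_iSup₂ (f := fun k (_ : k ∈ spectrum ℂ (b * a)) => (‖k‖₊ : ℝ≥0∞)) k this.1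
  · refine iSup₂_le fun k hk => ?_
    rcases eq_or_ne k 0 with rfl | h0
    · simp
    · have : k ∈ spectrum ℂ (a * b) \ {0} := h.symm ▸ ⟨hk, h0⟩
      exact le_iSup₂ (f := fun k (_ : k ∈ spectrum ℂ (a * b)) => (‖k‖₊ : ℝ≥0∞)) k this.1

/-- for positive operators `A`, `Â` on a complex Hilbert space and `μ > 0`,
if `‖(Â - A)(A + μI)⁻¹‖ ≤ 1/2` then
`‖(A + μI)^{1/2} ((Â + μI)^{1/2})⁻¹‖ ≤ √2` and
`‖(Â + μI)^{1/2} ((A + μI)^{1/2})⁻¹‖ ≤ √(3/2)`.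
Here `B` is the inverse of `A + μI`, `SA`/`SAh` are the unique positive square roots of
`A + μI`/`Â + μI`, and `CA`/`CAh` their (unique two-sided) inverses. -/
theorem sqrt_comparison_bounds
    {H : Type*} [NormedAddCommGroup H] [InnerProductSpace ℂ H] [CompleteSpace H]
    (A Ah : H →L[ℂ] H) (hA : A.IsPositive) (hAh : Ah.IsPositive)
    (μ : ℝ) (hμ : 0 < μ)
    (B : H →L[ℂ] H) (hB1 : (A + (μ : ℂ) • 1) * B = 1) (hB2 : B * (A + (μ : ℂ) • 1) = 1)
    (hsmall : ‖(Ah - A) * B‖ ≤ 1 / 2)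
    (SA : H →L[ℂ] H) (hSA : SA.IsPositive) (hSA2 : SA * SA = A + (μ : ℂ) • 1)
    (SAh : H →L[ℂ] H) (hSAh : SAh.IsPositive) (hSAh2 : SAh * SAh = Ah + (μ : ℂ) • 1) :
    ∀ CA : H →L[ℂ] H, SA * CA = 1 → CA * SA = 1 →
      ∀ CAh : H →L[ℂ] H, SAh * CAh = 1 → CAh * SAh = 1 →
        ‖SA * CAh‖ ≤ Real.sqrt 2 ∧ ‖SAh * CA‖ ≤ Real.sqrt (3 / 2) := by
  intro CA hCA1 hCA2 CAh hCAh1 hCAh2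
  rcases subsingleton_or_nontrivial H with hsub | hnt
  · constructor
    · rw [Subsingleton.elim (SA * CAh) 0, norm_zero]
      exact Real.sqrt_nonneg _
    · rw [Subsingleton.elim (SAh * CA) 0, norm_zero]
      exact Real.sqrt_nonneg _
  have hSAsa : IsSelfAdjoint SA := hSA.isSelfAdjoint
  have hSAhsa : IsSelfAdjoint SAh := hSAh.isSelfAdjoint
  have hDsa : IsSelfAdjoint (Ah - A) := hAh.isSelfAdjoint.sub hA.isSelfAdjoint
  -- CA is self-adjoint
  have hCAsa : IsSelfAdjoint CA := by
    have h1 : star CA * SA = 1 := by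
      have := congrArg star hCA1
      rwa [star_mul, hSAsa.star_eq, star_one] at this
    calc star CA = star CA * (SA * CA) := by rw [hCA1, mul_one]
    _ = (star CA * SA) * CA := by rw [mul_assoc]
    _ = CA := by rw [h1, one_mul]
  -- CA * CA = B
  have hCACA : CA * CA = B := by
    have h1 : (CA * CA) * (A + (μ : ℂ) • 1) = 1 := by
      rw [← hSA2]
      calc CA * CA * (SA * SA) = CA * (CA * SA) * SA := by noncomm_ring
      _ = 1 := by rw [hCA2, mul_one, hCA2]
    calc CA * CA = (CA * CA) * ((A + (μ : ℂ) • 1) * B) := by rw [hB1, mul_one]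
    _ = ((CA * CA) * (A + (μ : ℂ) • 1)) * B := by noncomm_ring
    _ = B := by rw [h1, one_mul]
  -- key norm bound
  set P : H →L[ℂ] H := CA * (Ah - A) * CA with hPdef
  have hPsa : IsSelfAdjoint P := by
    have := hDsa.conjugate CA
    rwa [hCAsa.star_eq] at this
  have hPnorm : ‖P‖ ≤ 1 / 2 := by
    have h1 : spectralRadius ℂ P = ‖P‖₊ := hPsa.spectralRadius_eq_nnnorm
    have h2 : spectralRadius ℂ P = spectralRadius ℂ ((Ah - A) * B) := by
      calc spectralRadius ℂ P = spectralRadius ℂ ((CA * (Ah - A)) * CA) := rfl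
      _ = spectralRadius ℂ (CA * (CA * (Ah - A))) := spectralRadius_mul_swap _ _
      _ = spectralRadius ℂ (B * (Ah - A)) := by rw [← mul_assoc, hCACA]
      _ = spectralRadius ℂ ((Ah - A) * B) := spectralRadius_mul_swap _ _
    have h3 : (‖P‖₊ : ℝ≥0∞) ≤ ‖(Ah - A) * B‖₊ := by
      rw [← h1, h2]; exact spectrum.spectralRadius_le_nnnorm _
    have h4 : ‖P‖ ≤ ‖(Ah - A) * B‖ := by exact_mod_cast h3
    linarith
  -- self-adjoint operators move across the inner product
  have hmove : ∀ (T : H →L[ℂ] H), IsSelfAdjoint T → ∀ x y : H,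
      (inner ℂ (T x) y : ℂ) = inner ℂ x (T y) := by
    intro T hT x y
    rw [← ContinuousLinearMap.adjoint_inner_left, ← ContinuousLinearMap.star_eq_adjoint,
      hT.star_eq]
  -- pointwise key bound
  have hkey : ∀ g : H, |Complex.re (inner ℂ ((Ah - A) g) g : ℂ)| ≤ (1 / 2) * ‖SA g‖ ^ 2 := by
    intro g
    set w := SA g with hw
    have hCAw : CA w = g := by
      have := congrArg (fun T => T g) hCA2
      simpa [ContinuousLinearMap.mul_apply] using this
    have hPw : P w = CA ((Ah - A) g) := by
      simp [hPdef, ContinuousLinearMap.mul_apply, hCAw]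
    have h1 : (inner ℂ (P w) w : ℂ) = inner ℂ ((Ah - A) g) g := by
      rw [hPw, hmove CA hCAsa, hCAw]
    have h2 : ‖(inner ℂ (P w) w : ℂ)‖ ≤ (1 / 2) * ‖w‖ ^ 2 := by
      calc ‖(inner ℂ (P w) w : ℂ)‖ ≤ ‖P w‖ * ‖w‖ := norm_inner_le_norm _ _
      _ ≤ (‖P‖ * ‖w‖) * ‖w‖ :=
        mul_le_mul_of_nonneg_right (P.le_opNorm w) (norm_nonneg _)
      _ ≤ ((1 / 2) * ‖w‖) * ‖w‖ := by
        nlinarith [mul_le_mul_of_nonneg_right hPnorm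
          (mul_nonneg (norm_nonneg w) (norm_nonneg w)), norm_nonneg w]
      _ = (1 / 2) * ‖w‖ ^ 2 := by ring
    have h3 : |Complex.re (inner ℂ ((Ah - A) g) g : ℂ)| ≤ ‖(inner ℂ ((Ah - A) g) g : ℂ)‖ :=
      Complex.abs_re_le_norm _
    rw [h1] at h2
    exact h3.trans h2
  -- norm of SA g squared as a quadratic form
  have hSAq : ∀ g : H, ‖SA g‖ ^ 2 = Complex.re (inner ℂ ((A + (μ : ℂ) • 1) g) g : ℂ) := by
    intro g
    rw [← hSA2]
    have : (inner ℂ ((SA * SA) g) g : ℂ) = inner ℂ (SA g) (SA g) := by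
      rw [ContinuousLinearMap.mul_apply, hmove SA hSAsa]
    rw [this]
    exact (inner_self_eq_norm_sq (𝕜 := ℂ) (SA g)).symm
  have hSAhq : ∀ g : H, ‖SAh g‖ ^ 2 = Complex.re (inner ℂ ((Ah + (μ : ℂ) • 1) g) g : ℂ) := by
    intro g
    rw [← hSAh2]
    have : (inner ℂ ((SAh * SAh) g) g : ℂ) = inner ℂ (SAh g) (SAh g) := by
      rw [ContinuousLinearMap.mul_apply, hmove SAh hSAhsa]
    rw [this]
    exact (inner_self_eq_norm_sq (𝕜 := ℂ) (SAh g)).symm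
  -- splitting identity
  have hsplit : ∀ g : H, ‖SAh g‖ ^ 2 = ‖SA g‖ ^ 2 + Complex.re (inner ℂ ((Ah - A) g) g : ℂ) := by
    intro g
    rw [hSAhq, hSAq]
    have : (Ah + (μ : ℂ) • 1) g = (A + (μ : ℂ) • 1) g + (Ah - A) g := by
      simp only [ContinuousLinearMap.add_apply, ContinuousLinearMap.sub_apply,
        ContinuousLinearMap.smul_apply, ContinuousLinearMap.one_apply]
      abel
    rw [this, inner_add_left, Complex.add_re]
  constructor
  · -- ‖SA * CAh‖ ≤ √2
    refine ContinuousLinearMap.opNorm_le_bound _ (Real.sqrt_nonneg 2) fun w => ?_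
    set g := CAh w with hg
    have hSAhg : SAh g = w := by
      have := congrArg (fun T => T w) hCAh1
      simpa [ContinuousLinearMap.mul_apply] using this
    have h1 : ‖SA g‖ ^ 2 ≤ ‖w‖ ^ 2 + (1 / 2) * ‖SA g‖ ^ 2 := by
      have hs := hsplit g
      have hk := hkey g
      rw [hSAhg] at hs
      have heq : ‖SA g‖ ^ 2 = ‖w‖ ^ 2 - Complex.re (inner ℂ ((Ah - A) g) g : ℂ) := by linarith
      rw [heq]
      cases abs_le.mp hk with
      | intro hl hr => linarith
    have h2 : ‖SA g‖ ^ 2 ≤ 2 * ‖w‖ ^ 2 := by linarith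
    have happ : (SA * CAh) w = SA g := rfl
    rw [happ]
    have hs2 : Real.sqrt 2 ^ 2 = 2 := Real.sq_sqrt (by norm_num)
    nlinarith [norm_nonneg (SA g), norm_nonneg w, Real.sqrt_nonneg 2,
      mul_nonneg (Real.sqrt_nonneg 2) (norm_nonneg w)]
  · -- ‖SAh * CA‖ ≤ √(3/2)
    refine ContinuousLinearMap.opNorm_le_bound _ (Real.sqrt_nonneg _) fun w => ?_
    set g := CA w with hg
    have hSAg : SA g = w := by
      have := congrArg (fun T => T w) hCA1
      simpa [ContinuousLinearMap.mul_apply] using this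
    have h1 : ‖SAh g‖ ^ 2 ≤ (3 / 2) * ‖w‖ ^ 2 := by
      have hs := hsplit g
      have hk := hkey g
      rw [hSAg] at hs hk
      cases abs_le.mp hk with
      | intro hl hr => linarith
    have happ : (SAh * CA) w = SAh g := rfl
    rw [happ]
    have hs2 : Real.sqrt (3 / 2) ^ 2 = 3 / 2 := Real.sq_sqrt (by norm_num)
    nlinarith [norm_nonneg (SAh g), norm_nonneg w, Real.sqrt_nonneg (3 / 2 : ℝ),
      mul_nonneg (Real.sqrt_nonneg (3 / 2 : ℝ)) (norm_nonneg w)]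
end

section
/- Let Â be a positive bounded linear operator on a complex Hilbert space H, let λ > 0, and let P be an orthogonal projection on H (P self-adjoint with P ∘ P = P) such that P ∘ Â^{1/2} = Â^{1/2}. Then: (a) ⟨Â^{1/2}(Â + λI)^{-1}Â^{1/2} f, f⟩ ≤ ⟨Pf, f⟩ for all f ∈ H; (b) ⟨(I − P)f, f⟩ ≤ λ⟨(Â + λI)^{-1} f, f⟩ for all f ∈ H; and (c) ‖(I − P) ∘ (Â + λI)^{1/2}‖ ≤ √λ. -/
/-- let `Â` be positive on a complex Hilbert space `H`, `μ > 0`, and `P`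
an orthogonal projection with `P ∘ Â^{1/2} = Â^{1/2}`.  Then
(a) `⟨Â^{1/2}(Â + μI)⁻¹Â^{1/2} f, f⟩ ≤ ⟨Pf, f⟩` for all `f`,
(b) `⟨(I - P)f, f⟩ ≤ μ ⟨(Â + μI)⁻¹ f, f⟩` for all `f`, and
(c) `‖(I - P)(Â + μI)^{1/2}‖ ≤ √μ`.
Here `S` is the unique positive square root of `Â`, `S'` that of `Â + μI`, and `B`
the (unique two-sided) inverse of `Â + μI`. -/
theorem projection_range_bounds
    {H : Type*} [NormedAddCommGroup H] [InnerProductSpace ℂ H] [CompleteSpace H]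
    (Ah : H →L[ℂ] H) (hAh : Ah.IsPositive) (μ : ℝ) (hμ : 0 < μ)
    (P : H →L[ℂ] H) (hP : IsSelfAdjoint P) (hP2 : P * P = P)
    (S : H →L[ℂ] H) (hS : S.IsPositive) (hS2 : S * S = Ah)
    (hPS : P * S = S)
    (S' : H →L[ℂ] H) (hS' : S'.IsPositive) (hS'2 : S' * S' = Ah + (μ : ℂ) • 1)
    (B : H →L[ℂ] H) (hB1 : (Ah + (μ : ℂ) • 1) * B = 1)
    (hB2 : B * (Ah + (μ : ℂ) • 1) = 1) :
    (∀ f : H, (inner ℂ ((S * B * S) f) f : ℂ).re ≤ (inner ℂ (P f) f : ℂ).re) ∧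
    (∀ f : H, (inner ℂ ((1 - P) f) f : ℂ).re ≤ μ * (inner ℂ (B f) f : ℂ).re) ∧
    ‖(1 - P) * S'‖ ≤ Real.sqrt μ := by
  set A : H →L[ℂ] H := Ah + (μ : ℂ) • 1 with hAdef
  have hPsym : ∀ x y : H, (inner ℂ (P x) y : ℂ) = inner ℂ x (P y) := fun x y => hP.isSymmetric x y
  have hS'sym : ∀ x y : H, (inner ℂ (S' x) y : ℂ) = inner ℂ x (S' y) := fun x y =>
    hS'.1 x y
  -- A is self-adjoint
  have hμ1 : IsSelfAdjoint ((μ : ℂ) • (1 : H →L[ℂ] H)) := by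
    rw [IsSelfAdjoint, star_smul, star_one, Complex.star_def, Complex.conj_ofReal]
  have hAsa : IsSelfAdjoint A := hAh.isSelfAdjoint.add hμ1
  have hAsym : ∀ x y : H, (inner ℂ (A x) y : ℂ) = inner ℂ x (A y) := fun x y =>
    hAsa.isSymmetric x y
  -- A is positive
  have hμ1pos : ((μ : ℂ) • (1 : H →L[ℂ] H)).IsPositive := by
    refine ⟨hμ1.isSymmetric, fun x => ?_⟩
    simp only [ContinuousLinearMap.reApplyInnerSelf, ContinuousLinearMap.smul_apply,
      ContinuousLinearMap.one_apply, inner_smul_left, Complex.star_def, Complex.conj_ofReal,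
      RCLike.re_to_complex, Complex.re_ofReal_mul]
    exact mul_nonneg hμ.le (by simpa using inner_self_nonneg (𝕜 := ℂ) (x := x))
  have hApos : A.IsPositive := hAh.add hμ1pos
  -- B is self-adjoint and positive
  have hAstarB : A * star B = 1 := by
    have := congrArg star hB2
    rwa [star_mul, hAsa.star_eq, star_one] at this
  have hBsa : IsSelfAdjoint B := by
    calc star B = (B * A) * star B := by rw [hB2, one_mul]
      _ = B * (A * star B) := by rw [mul_assoc]
      _ = B := by rw [hAstarB, mul_one]
  have hBpos : ∀ f : H, 0 ≤ (inner ℂ (B f) f : ℂ).re := by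
    intro f
    have hf : A (B f) = f := by rw [← ContinuousLinearMap.mul_apply, hB1, ContinuousLinearMap.one_apply]
    have h := hApos.inner_nonneg_left (B f)
    rw [hAsym, hf] at h
    exact (Complex.nonneg_iff.mp h).1
  -- commutation
  have hSA : S * A = A * S := by
    simp only [hAdef, mul_add, add_mul, ← hS2, mul_smul_comm, smul_mul_assoc, mul_one, one_mul,
      mul_assoc]
  have hSB : B * S = S * B := by
    calc B * S = B * S * (A * B) := by rw [hB1, mul_one]
      _ = B * (S * A) * B := by simp only [mul_assoc]
      _ = B * (A * S) * B := by rw [hSA]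
      _ = (B * A) * (S * B) := by simp only [mul_assoc]
      _ = S * B := by rw [hB2, one_mul]
  have hS'A : S' * A = A * S' := by rw [← hS'2, mul_assoc]
  have hS'B : B * S' = S' * B := by
    calc B * S' = B * S' * (A * B) := by rw [hB1, mul_one]
      _ = B * (S' * A) * B := by simp only [mul_assoc]
      _ = B * (A * S') * B := by rw [hS'A]
      _ = (B * A) * (S' * B) := by simp only [mul_assoc]
      _ = S' * B := by rw [hB2, one_mul]
  -- key identities
  have hSBS : S * B * S = 1 - (μ : ℂ) • B := by
    have h1 : Ah * B + (μ : ℂ) • B = 1 := by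
      have := hB1
      rwa [add_mul, smul_mul_assoc, one_mul] at this
    calc S * B * S = S * S * B := by rw [mul_assoc, hSB, ← mul_assoc]
      _ = Ah * B := by rw [hS2]
      _ = 1 - (μ : ℂ) • B := (eq_sub_of_add_eq h1)
  have hS'BS' : S' * B * S' = 1 := by
    rw [mul_assoc, hS'B, ← mul_assoc, hS'2, hB1]
  -- bound: re ⟪(S*B*S) g, g⟫ ≤ re ⟪g, g⟫
  have hbound : ∀ g : H, (inner ℂ ((S * B * S) g) g : ℂ).re ≤ (inner ℂ g g : ℂ).re := by
    intro g
    have h1 : (inner ℂ ((S * B * S) g) g : ℂ) = inner ℂ g g - (μ:ℂ) * inner ℂ (B g) g := by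
      rw [hSBS, ContinuousLinearMap.sub_apply, ContinuousLinearMap.one_apply,
        ContinuousLinearMap.smul_apply, inner_sub_left, inner_smul_left, Complex.conj_ofReal]
    rw [h1, Complex.sub_re]
    have : 0 ≤ ((μ:ℂ) * inner ℂ (B g) g).re := by
      rw [Complex.re_ofReal_mul]
      exact mul_nonneg hμ.le (hBpos g)
    linarith
  -- part (a)
  have hSP : S * P = S := by
    have := congrArg star hPS
    rwa [star_mul, hS.isSelfAdjoint.star_eq, hP.star_eq] at this
  have hSBSP : (S * B * S) * P = S * B * S := by rw [mul_assoc, hSP]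
  have hPSBS : P * (S * B * S) = S * B * S := by rw [← mul_assoc, ← mul_assoc, hPS]
  have main_a : ∀ f : H, (inner ℂ ((S * B * S) f) f : ℂ).re ≤ (inner ℂ (P f) f : ℂ).re := by
    intro f
    have h1 : (S * B * S) f = P ((S * B * S) (P f)) := by
      conv_lhs => rw [← hPSBS]
      conv_lhs => rw [← hSBSP]
      simp [ContinuousLinearMap.mul_apply]
    have h2 : (inner ℂ ((S * B * S) f) f : ℂ) = inner ℂ ((S * B * S) (P f)) (P f) := by
      rw [h1, hPsym]
    have h3 : (inner ℂ (P f) f : ℂ) = inner ℂ (P f) (P f) := by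
      have : P (P f) = P f := by rw [← ContinuousLinearMap.mul_apply, hP2]
      conv_lhs => rw [← this]
      exact hPsym (P f) f
    rw [h2, h3]
    exact hbound (P f)
  have main_b : ∀ f : H, (inner ℂ ((1 - P) f) f : ℂ).re ≤ μ * (inner ℂ (B f) f : ℂ).re := by
    intro f
    have ha := main_a f
    have h1 : (inner ℂ ((S * B * S) f) f : ℂ) = inner ℂ f f - (μ:ℂ) * inner ℂ (B f) f := by
      rw [hSBS, ContinuousLinearMap.sub_apply, ContinuousLinearMap.one_apply,
        ContinuousLinearMap.smul_apply, inner_sub_left, inner_smul_left, Complex.conj_ofReal]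
    rw [h1] at ha
    have h2 : (inner ℂ ((1 - P) f) f : ℂ) = inner ℂ f f - inner ℂ (P f) f := by
      simp [ContinuousLinearMap.sub_apply, inner_sub_left]
    rw [h2, Complex.sub_re]
    rw [Complex.sub_re, Complex.mul_re] at ha
    simp only [Complex.ofReal_re, Complex.ofReal_im, zero_mul, sub_zero] at ha
    linarith
  refine ⟨main_a, main_b, ?_⟩
  · -- part (c)
    refine ContinuousLinearMap.opNorm_le_bound _ (Real.sqrt_nonneg μ) fun f => ?_
    have h1Psa : IsSelfAdjoint ((1 : H →L[ℂ] H) - P) := (IsSelfAdjoint.one (R := H →L[ℂ] H)).sub hP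
    have h1Psym : ∀ x y : H, (inner ℂ (((1:H →L[ℂ] H) - P) x) y : ℂ) =
        inner ℂ x (((1:H →L[ℂ] H) - P) y) := fun x y => h1Psa.isSymmetric x y
    have h1P2 : ((1:H →L[ℂ] H) - P) * ((1:H →L[ℂ] H) - P) = (1:H →L[ℂ] H) - P := by
      rw [sub_mul, one_mul, mul_sub, mul_one, hP2, sub_self, sub_zero]
    set g := S' f with hg
    set u := ((1:H →L[ℂ] H) - P) g with hu
    have happ : ((1 - P) * S') f = u := rfl
    have hsq : ‖u‖ ^ 2 ≤ μ * ‖f‖ ^ 2 := by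
      have h12 : ((1:H →L[ℂ] H) - P) (((1:H →L[ℂ] H) - P) g) = ((1:H →L[ℂ] H) - P) g := by
        rw [← ContinuousLinearMap.mul_apply, h1P2]
      have e1 : (inner ℂ u u : ℂ) = inner ℂ (((1:H →L[ℂ] H) - P) g) g := by
        have := h1Psym (((1:H →L[ℂ] H) - P) g) g
        rw [h12] at this
        exact this.symm
      have e2 : ((inner ℂ (((1:H →L[ℂ] H) - P) g) g : ℂ)).re ≤ μ * (inner ℂ (B g) g : ℂ).re := main_b g
      have e3 : (inner ℂ (B g) g : ℂ) = inner ℂ f f := by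
        have : S' (B (S' f)) = f := by
          rw [← ContinuousLinearMap.mul_apply, ← ContinuousLinearMap.mul_apply, hS'BS',
            ContinuousLinearMap.one_apply]
        calc (inner ℂ (B g) g : ℂ) = inner ℂ (S' (B (S' f))) f := (hS'sym (B (S' f)) f).symm
          _ = inner ℂ f f := by rw [this]
      have e4 : ‖u‖ ^ 2 = (inner ℂ (((1:H →L[ℂ] H) - P) g) g : ℂ).re := by
        rw [← e1]
        simpa using (inner_self_eq_norm_sq (𝕜 := ℂ) u).symm
      have e5 : (inner ℂ (f : H) f : ℂ).re = ‖f‖ ^ 2 := by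
        rw [← inner_self_eq_norm_sq (𝕜 := ℂ)]; simp
      rw [e4]
      calc (inner ℂ (((1:H →L[ℂ] H) - P) g) g : ℂ).re ≤ μ * (inner ℂ (B g) g : ℂ).re := e2
        _ = μ * ‖f‖ ^ 2 := by rw [e3, e5]
    have hnn : (0:ℝ) ≤ Real.sqrt μ * ‖f‖ := mul_nonneg (Real.sqrt_nonneg μ) (norm_nonneg f)
    rw [happ]
    nlinarith [Real.sq_sqrt hμ.le, norm_nonneg u, Real.sqrt_nonneg μ, norm_nonneg f,
      sq_nonneg (‖u‖ - Real.sqrt μ * ‖f‖)]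
end

section
/- Let H and K be complex Hilbert spaces, let J : H → K be a bounded linear operator, let 𝒜 be a positive bounded linear operator on K, and set T := J ∘ J*. Then the operators J*𝒜J on H and T^{1/2}𝒜T^{1/2} on K are positive, and for every continuous function g : ℝ → ℝ one has J ∘ g(J*𝒜J) ∘ J* = T^{1/2} ∘ g(T^{1/2}𝒜T^{1/2}) ∘ T^{1/2}, where g is applied to the self-adjoint operators J*𝒜J and T^{1/2}𝒜T^{1/2} via the continuous functional calculus. -/
lemma spec_subset_Icc_aux {E : Type*} [NormedAddCommGroup E] [InnerProductSpace ℂ E]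
    [CompleteSpace E] (T : E →L[ℂ] E) {M : ℝ} (hT : ‖T‖ ≤ M) :
    spectrum ℝ T ⊆ Set.Icc (-M) M := by
  intro x hx
  have h1 := spectrum.subset_closedBall_norm_mul (𝕜 := ℝ) T hx
  rw [Metric.mem_closedBall, Real.dist_eq, sub_zero] at h1
  have h2 : ‖T‖ * ‖(1 : E →L[ℂ] E)‖ ≤ M := by
    calc ‖T‖ * ‖(1 : E →L[ℂ] E)‖ ≤ ‖T‖ * 1 :=
          mul_le_mul_of_nonneg_left ContinuousLinearMap.norm_id_le (norm_nonneg T)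
      _ = ‖T‖ := mul_one _
      _ ≤ M := hT
  have h3 := le_trans h1 h2
  constructor
  · linarith [neg_abs_le x]
  · linarith [le_abs_self x]

set_option maxHeartbeats 2000000 in
open ContinuousLinearMap in
/-- let `J : H → K` be bounded, `𝒜` positive on `K`, `T = J J*`, and let
`S` be the unique positive square root of `T`.  Then `J* 𝒜 J` and `T^{1/2} 𝒜 T^{1/2}`
are positive and for every continuous `g : ℝ → ℝ` (applied via the continuous
functional calculus) `J g(J* 𝒜 J) J* = T^{1/2} g(T^{1/2} 𝒜 T^{1/2}) T^{1/2}`. -/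
theorem intertwining_functional_calculus
    {H K : Type*} [NormedAddCommGroup H] [InnerProductSpace ℂ H] [CompleteSpace H]
    [NormedAddCommGroup K] [InnerProductSpace ℂ K] [CompleteSpace K]
    (J : H →L[ℂ] K) (𝒜 : K →L[ℂ] K) (h𝒜 : 𝒜.IsPositive)
    (S : K →L[ℂ] K) (hS : S.IsPositive) (hS2 : S * S = J ∘L adjoint J)
    (g : ℝ → ℝ) (hg : Continuous g) :
    (adjoint J ∘L 𝒜 ∘L J).IsPositive ∧ (S * 𝒜 * S).IsPositive ∧
      J ∘L cfc g (adjoint J ∘L 𝒜 ∘L J) ∘L adjoint J = S * cfc g (S * 𝒜 * S) * S := by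
  set A : H →L[ℂ] H := adjoint J ∘L 𝒜 ∘L J with hA
  set B : K →L[ℂ] K := S * 𝒜 * S with hB
  have hApos : A.IsPositive := by
    have := h𝒜.conj_adjoint (adjoint J)
    rwa [adjoint_adjoint] at this
  have hBpos : B.IsPositive := by
    have := h𝒜.conj_adjoint S
    rwa [hS.isSelfAdjoint.adjoint_eq] at this
  refine ⟨hApos, hBpos, ?_⟩
  have hAsa : IsSelfAdjoint A := hApos.isSelfAdjoint
  have hBsa : IsSelfAdjoint B := hBpos.isSelfAdjoint
  -- the identity for powers
  have key : ∀ n : ℕ, J ∘L (A ^ n) ∘L adjoint J = S * B ^ n * S := by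
    intro n
    induction n with
    | zero => simp only [pow_zero, mul_one]; rw [ContinuousLinearMap.one_def, ContinuousLinearMap.id_comp]; exact hS2.symm
    | succ n ih =>
      have h1 : J ∘L (A ^ (n + 1)) ∘L adjoint J
          = (J ∘L adjoint J) ∘L 𝒜 ∘L (J ∘L (A ^ n) ∘L adjoint J) := by
        ext x
        simp [pow_succ', hA, comp_apply, mul_apply]
      have h2 : S * B ^ (n + 1) * S = (S * S) ∘L 𝒜 ∘L (S * B ^ n * S) := by
        ext x
        simp [pow_succ', hB, comp_apply, mul_apply]
      rw [h1, h2, hS2, ih]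
  -- the identity for polynomials
  have keyP : ∀ p : Polynomial ℝ,
      J ∘L Polynomial.aeval A p ∘L adjoint J = S * Polynomial.aeval B p * S := by
    intro p
    induction p using Polynomial.induction_on' with
    | add p q hp hq =>
      simp only [map_add]
      calc J ∘L (Polynomial.aeval A p + Polynomial.aeval A q) ∘L adjoint J
          = (J ∘L Polynomial.aeval A p ∘L adjoint J)
            + (J ∘L Polynomial.aeval A q ∘L adjoint J) := by ext x; simp [comp_apply]
        _ = S * Polynomial.aeval B p * S + S * Polynomial.aeval B q * S := by rw [hp, hq]
        _ = S * (Polynomial.aeval B p + Polynomial.aeval B q) * S := by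
            ext x; simp [mul_apply]
    | monomial n r =>
      have hsm1 : Polynomial.aeval A (Polynomial.monomial n r) = r • A ^ n := by
        simp [Polynomial.aeval_monomial, Algebra.algebraMap_eq_smul_one, smul_mul_assoc]
      have hsm2 : Polynomial.aeval B (Polynomial.monomial n r) = r • B ^ n := by
        simp [Polynomial.aeval_monomial, Algebra.algebraMap_eq_smul_one, smul_mul_assoc]
      rw [hsm1, hsm2]
      have h1 : J ∘L (r • A ^ n) ∘L adjoint J = r • (J ∘L (A ^ n) ∘L adjoint J) := by
        ext x; simp [comp_apply]
      have h2 : S * (r • B ^ n) * S = r • (S * B ^ n * S) := by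
        rw [mul_smul_comm, smul_mul_assoc]
      rw [h1, h2, key n]
  -- spectra are contained in a common compact interval
  set M : ℝ := max ‖A‖ ‖B‖ with hM
  have hM0 : (0 : ℝ) ≤ M := le_trans (norm_nonneg A) (le_max_left _ _)
  have hMA : spectrum ℝ A ⊆ Set.Icc (-M) M := spec_subset_Icc_aux A (le_max_left _ _)
  have hMB : spectrum ℝ B ⊆ Set.Icc (-M) M := spec_subset_Icc_aux B (le_max_right _ _)
  -- inclusion maps
  set D : Set ℝ := Set.Icc (-M) M with hD
  let ιA : C(spectrum ℝ A, D) := ⟨Set.inclusion hMA, continuous_inclusion hMA⟩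
  let ιB : C(spectrum ℝ B, D) := ⟨Set.inclusion hMB, continuous_inclusion hMB⟩
  -- the two continuous maps from C(D, ℝ)
  let L₁ : C(D, ℝ) → (K →L[ℂ] K) := fun f => J ∘L cfcHom hAsa (f.comp ιA) ∘L adjoint J
  let L₂ : C(D, ℝ) → (K →L[ℂ] K) := fun f => S * cfcHom hBsa (f.comp ιB) * S
  have hconj : Continuous fun X : H →L[ℂ] H => J ∘L X ∘L adjoint J :=
    (ContinuousLinearMap.compL ℂ K H K J).continuous.comp
      ((ContinuousLinearMap.compL ℂ K H H).flip (adjoint J)).continuous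
  have hmul : Continuous fun X : K →L[ℂ] K => S * X * S :=
    (continuous_const.mul continuous_id).mul continuous_const
  have hL₁c : Continuous L₁ :=
    hconj.comp ((cfcHom_continuous hAsa).comp (ContinuousMap.continuous_precomp ιA))
  have hL₂c : Continuous L₂ :=
    hmul.comp ((cfcHom_continuous hBsa).comp (ContinuousMap.continuous_precomp ιB))
  -- agreement on polynomial functions
  have hagree : ∀ f ∈ polynomialFunctions D, L₁ f = L₂ f := by
    intro f hf
    rw [polynomialFunctions, Subalgebra.mem_map] at hf
    obtain ⟨p, -, rfl⟩ := hf
    have hfA : (Polynomial.toContinuousMapOnAlgHom D p : C(D, ℝ)).comp ιA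
        = ⟨_, (Polynomial.continuous p).continuousOn.restrict⟩ := by
      ext x; rfl
    have hfB : (Polynomial.toContinuousMapOnAlgHom D p : C(D, ℝ)).comp ιB
        = ⟨_, (Polynomial.continuous p).continuousOn.restrict⟩ := by
      ext x; rfl
    have hcA : cfcHom hAsa (⟨_, (Polynomial.continuous p).continuousOn.restrict⟩ :
        C(spectrum ℝ A, ℝ)) = Polynomial.aeval A p := by
      rw [← cfc_apply p.eval A hAsa (Polynomial.continuous p).continuousOn]
      exact cfc_polynomial p A
    have hcB : cfcHom hBsa (⟨_, (Polynomial.continuous p).continuousOn.restrict⟩ :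
        C(spectrum ℝ B, ℝ)) = Polynomial.aeval B p := by
      rw [← cfc_apply p.eval B hBsa (Polynomial.continuous p).continuousOn]
      exact cfc_polynomial p B
    show J ∘L cfcHom hAsa _ ∘L adjoint J = S * cfcHom hBsa _ * S
    rw [hfA, hfB, hcA, hcB]
    exact keyP p
  -- extend by density
  have hall : ∀ f : C(D, ℝ), L₁ f = L₂ f := by
    intro f
    have hclosed : IsClosed {f : C(D, ℝ) | L₁ f = L₂ f} := isClosed_eq hL₁c hL₂c
    have hdense : closure (polynomialFunctions D : Set C(D, ℝ)) = Set.univ := by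
      have h := polynomialFunctions_closure_eq_top (-M) M
      have h2 : ((polynomialFunctions (Set.Icc (-M) M)).topologicalClosure : Set C(D, ℝ))
          = ((⊤ : Subalgebra ℝ C(D, ℝ)) : Set C(D, ℝ)) := by rw [h]
      rw [Subalgebra.topologicalClosure_coe, Algebra.coe_top] at h2
      exact h2
    have hf : f ∈ closure (polynomialFunctions D : Set C(D, ℝ)) := by
      rw [hdense]; trivial
    exact closure_minimal (fun x hx => hagree x hx) hclosed hf
  -- conclude
  let gD : C(D, ℝ) := (⟨g, hg⟩ : C(ℝ, ℝ)).restrict D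
  have hgA : gD.comp ιA = (⟨_, (hg.continuousOn (s := spectrum ℝ A)).restrict⟩ :
      C(spectrum ℝ A, ℝ)) := by ext x; rfl
  have hgB : gD.comp ιB = (⟨_, (hg.continuousOn (s := spectrum ℝ B)).restrict⟩ :
      C(spectrum ℝ B, ℝ)) := by ext x; rfl
  have := hall gD
  show J ∘L cfc g A ∘L adjoint J = S * cfc g B * S
  rw [cfc_apply g A hAsa (hg.continuousOn), cfc_apply g B hBsa (hg.continuousOn)]
  simpa [L₁, L₂, hgA, hgB] using this
end

section
/- Let H and K be complex Hilbert spaces, let J : H → K be a bounded linear operator, let 𝒜 be a positive bounded linear operator on K, set T := J ∘ J*, and let λ > 0. Then J*𝒜J + λI_H and T^{1/2}𝒜T^{1/2} + λI_K are boundedly invertible and J ∘ (J*𝒜J + λI_H)^{-1} ∘ J* = T^{1/2} ∘ (T^{1/2}𝒜T^{1/2} + λI_K)^{-1} ∘ T^{1/2}. -/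
/-!
With `T = J J* = S²`, the operator `X = T 𝒜 + μ` on `K` intertwines both resolvents:
`X J = J (J* 𝒜 J + μ)` and `X S = S (S 𝒜 S + μ)`. Since `X = S (S 𝒜) + μ` and `S 𝒜 S + μ`
are invertible together (Jacobson's lemma), `J (J* 𝒜 J + μ)⁻¹ = X⁻¹ J` and
`S (S 𝒜 S + μ)⁻¹ = X⁻¹ S`, so both sides of the identity equal `X⁻¹ T`.
-/

theorem isUnit_mul_add_smul_one_comm {𝕜 A : Type*} [Field 𝕜] [Ring A] [Algebra 𝕜 A]
    (a b : A) {c : 𝕜} (hc : c ≠ 0) : IsUnit (a * b + c • 1) ↔ IsUnit (b * a + c • 1) := by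
  have key (x : A) :
      IsUnit (x + c • 1) ↔ ((Units.mk0 (-c) (neg_ne_zero.mpr hc) : 𝕜ˣ) : 𝕜) ∉ spectrum 𝕜 x := by
    rw [spectrum.mem_iff, not_not, Units.val_mk0, Algebra.algebraMap_eq_smul_one,
      ← IsUnit.neg_iff]
    congr! 1
    module
  rw [key, key, spectrum.unit_mem_mul_comm]

theorem ContinuousLinearMap.IsPositive.isUnit_add_smul_one {E : Type*} [NormedAddCommGroup E]
    [InnerProductSpace ℂ E] [CompleteSpace E] {P : E →L[ℂ] E} (hP : P.IsPositive) {μ : ℝ}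
    (hμ : 0 < μ) : IsUnit (P + (μ : ℂ) • 1) := by
  have hpos := (isStrictlyPositive_algebraMap (A := E →L[ℂ] E) hμ).nonneg_add
    (P.nonneg_iff_isPositive.mpr hP)
  rw [Algebra.algebraMap_eq_smul_one, ← Complex.coe_smul] at hpos
  exact hpos.isUnit

theorem ContinuousLinearMap.comp_eq_comp_of_intertwine {R M N : Type*} [Semiring R]
    [TopologicalSpace M] [AddCommMonoid M] [Module R M]
    [TopologicalSpace N] [AddCommMonoid N] [Module R N]
    {X L : N →L[R] N} {a : M →L[R] N} {Y B : M →L[R] M}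
    (hL : L * X = 1) (h : X ∘L a = a ∘L Y) (hB : Y * B = 1) : a ∘L B = L ∘L a :=
  calc a ∘L B = (L * X) ∘L a ∘L B := by rw [hL, one_def, id_comp]
    _ = L ∘L a ∘L (Y * B) := by
      rw [mul_def, comp_assoc, ← comp_assoc X, h, mul_def]
      simp only [comp_assoc]
    _ = L ∘L a := by rw [hB, one_def, comp_id]

open ContinuousLinearMap in
/-- let `J : H → K` be bounded, `𝒜` positive on `K`, `T = J J*`, `S` the
unique positive square root of `T`, and `μ > 0`.  Then `J* 𝒜 J + μ I_H` and
`T^{1/2} 𝒜 T^{1/2} + μ I_K` are boundedly invertible and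
`J (J* 𝒜 J + μ I_H)⁻¹ J* = T^{1/2} (T^{1/2} 𝒜 T^{1/2} + μ I_K)⁻¹ T^{1/2}`. -/
theorem intertwining_resolvents
    {H K : Type*} [NormedAddCommGroup H] [InnerProductSpace ℂ H] [CompleteSpace H]
    [NormedAddCommGroup K] [InnerProductSpace ℂ K] [CompleteSpace K]
    (J : H →L[ℂ] K) (𝒜 : K →L[ℂ] K) (h𝒜 : 𝒜.IsPositive)
    (S : K →L[ℂ] K) (hS : S.IsPositive) (hS2 : S * S = J ∘L adjoint J)
    (μ : ℝ) (hμ : 0 < μ) :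
    IsUnit (adjoint J ∘L 𝒜 ∘L J + (μ : ℂ) • 1) ∧
    IsUnit (S * 𝒜 * S + (μ : ℂ) • 1) ∧
    ∀ B₁ : H →L[ℂ] H,
      (adjoint J ∘L 𝒜 ∘L J + (μ : ℂ) • 1) * B₁ = 1 →
      B₁ * (adjoint J ∘L 𝒜 ∘L J + (μ : ℂ) • 1) = 1 →
      ∀ B₂ : K →L[ℂ] K,
        (S * 𝒜 * S + (μ : ℂ) • 1) * B₂ = 1 →
        B₂ * (S * 𝒜 * S + (μ : ℂ) • 1) = 1 →
        J ∘L B₁ ∘L adjoint J = S * B₂ * S := by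
  have hSAS : IsUnit (S * 𝒜 * S + (μ : ℂ) • 1) := by
    have h := h𝒜.adjoint_conj S
    rw [hS.isSelfAdjoint.adjoint_eq] at h
    exact h.isUnit_add_smul_one hμ
  refine ⟨(h𝒜.adjoint_conj J).isUnit_add_smul_one hμ, hSAS, fun B₁ hB₁ _ B₂ hB₂ _ => ?_⟩
  set X : K →L[ℂ] K := S * S * 𝒜 + (μ : ℂ) • 1
  have hXS : X ∘L S = S ∘L (S * 𝒜 * S + (μ : ℂ) • 1) := by
    show (S * S * 𝒜 + (μ : ℂ) • 1) * S = S * (S * 𝒜 * S + (μ : ℂ) • 1)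
    noncomm_ring
  have hXJ : X ∘L J = J ∘L (adjoint J ∘L 𝒜 ∘L J + (μ : ℂ) • 1) := by
    simp only [X, hS2]
    ext x
    simp
  obtain ⟨L, hL⟩ : ∃ L, L * X = 1 := by
    have hX := (isUnit_mul_add_smul_one_comm S (S * 𝒜) (by exact_mod_cast hμ.ne')).mpr hSAS
    rw [← mul_assoc] at hX
    exact hX.exists_left_inv
  calc J ∘L B₁ ∘L adjoint J = L ∘L (S * S) := by
        rw [← comp_assoc, comp_eq_comp_of_intertwine hL hXJ hB₁, comp_assoc, hS2]
    _ = S * B₂ * S := by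
        rw [mul_def, ← comp_assoc, ← comp_eq_comp_of_intertwine hL hXS hB₂]
        rfl
end

section
/- Let H and G be complex Hilbert spaces, let V : G → H be a bounded linear operator with V*V = I_G, set P := V ∘ V*, let B be a positive bounded linear operator on H, and let λ > 0. Then P∘B∘P + λI_H and V*BV + λI_G are boundedly invertible and (P∘B∘P + λI_H)^{-1} ∘ P = V ∘ (V*BV + λI_G)^{-1} ∘ V*. -/
open ContinuousLinearMap in
lemma isUnit_pos_add_smul_one
    {H : Type*} [NormedAddCommGroup H] [InnerProductSpace ℂ H] [CompleteSpace H]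
    (A : H →L[ℂ] H) (hA : A.IsPositive) (μ : ℝ) (hμ : 0 < μ) :
    IsUnit (A + (μ : ℂ) • 1) := by
  apply isUnit_of_forall_le_norm_inner_map (c := μ.toNNReal)
  · simpa using hμ
  · intro x
    have h1 : inner ℂ ((A + (μ:ℂ) • 1) x) x = inner ℂ (A x) x + (μ:ℂ) * (‖x‖:ℂ)^2 := by
      simp only [ContinuousLinearMap.add_apply, ContinuousLinearMap.smul_apply,
        ContinuousLinearMap.one_apply, inner_add_left, inner_smul_left,
        Complex.conj_ofReal, inner_self_eq_norm_sq_to_K]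
      rfl
    have h2 : (0:ℝ) ≤ Complex.re (inner ℂ (A x) x : ℂ) := (Complex.nonneg_iff.mp (hA.inner_nonneg_left x)).1
    have h3 : Complex.re (inner ℂ ((A + (μ:ℂ) • 1) x) x : ℂ) = Complex.re (inner ℂ (A x) x : ℂ) + μ * ‖x‖^2 := by
      rw [h1, Complex.add_re, Complex.mul_re]
      simp [← Complex.ofReal_pow]
    calc ‖x‖ ^ 2 * (μ.toNNReal : ℝ) = μ * ‖x‖^2 := by
          rw [Real.coe_toNNReal _ hμ.le]; ring
      _ ≤ Complex.re (inner ℂ ((A + (μ:ℂ) • 1) x) x : ℂ) := by rw [h3]; linarith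
      _ ≤ ‖(inner ℂ ((A + (μ:ℂ) • 1) x) x : ℂ)‖ := Complex.re_le_norm _

open ContinuousLinearMap in
/-- let `V : G → H` be bounded with `V* V = I_G`, `P = V V*`, `B` positive
on `H` and `μ > 0`.  Then `P B P + μ I_H` and `V* B V + μ I_G` are boundedly invertible
and `(P B P + μ I_H)⁻¹ P = V (V* B V + μ I_G)⁻¹ V*`. -/
theorem nystrom_estimator_formula
    {H G : Type*} [NormedAddCommGroup H] [InnerProductSpace ℂ H] [CompleteSpace H]
    [NormedAddCommGroup G] [InnerProductSpace ℂ G] [CompleteSpace G]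
    (V : G →L[ℂ] H) (hV : adjoint V ∘L V = 1)
    (B : H →L[ℂ] H) (hB : B.IsPositive) (μ : ℝ) (hμ : 0 < μ) :
    IsUnit ((V ∘L adjoint V) * B * (V ∘L adjoint V) + (μ : ℂ) • 1) ∧
    IsUnit (adjoint V ∘L B ∘L V + (μ : ℂ) • 1) ∧
    ∀ B₁ : H →L[ℂ] H,
      ((V ∘L adjoint V) * B * (V ∘L adjoint V) + (μ : ℂ) • 1) * B₁ = 1 →
      B₁ * ((V ∘L adjoint V) * B * (V ∘L adjoint V) + (μ : ℂ) • 1) = 1 →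
      ∀ B₂ : G →L[ℂ] G,
        (adjoint V ∘L B ∘L V + (μ : ℂ) • 1) * B₂ = 1 →
        B₂ * (adjoint V ∘L B ∘L V + (μ : ℂ) • 1) = 1 →
        B₁ * (V ∘L adjoint V) = V ∘L B₂ ∘L adjoint V := by
  have hPadj : adjoint (V ∘L adjoint V) = V ∘L adjoint V := by
    rw [adjoint_comp, adjoint_adjoint]
  have hPBP : ((V ∘L adjoint V) * B * (V ∘L adjoint V)).IsPositive := by
    have := hB.conj_adjoint (V ∘L adjoint V)
    rw [hPadj] at this
    exact this
  have hVBV : (adjoint V ∘L B ∘L V).IsPositive := hB.adjoint_conj V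
  refine ⟨isUnit_pos_add_smul_one _ hPBP μ hμ, isUnit_pos_add_smul_one _ hVBV μ hμ, ?_⟩
  intro B₁ h1l h1r B₂ h2l h2r
  set P := V ∘L adjoint V with hP
  set T := P * B * P + (μ : ℂ) • 1 with hT
  set S := adjoint V ∘L B ∘L V + (μ : ℂ) • 1 with hS
  have key : T * (V ∘L B₂ ∘L adjoint V) = P := by
    have hTV : T ∘L V = V ∘L S := by
      ext x
      simp only [hT, hS, hP, add_comp, comp_add, smul_comp, comp_smul, one_def]
      simp only [ContinuousLinearMap.add_apply, ContinuousLinearMap.smul_apply,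
        ContinuousLinearMap.mul_apply, comp_apply, coe_id', id_eq]
      congr 1
      have : (adjoint V) (V x) = x := by
        have := congrArg (fun f => f x) hV
        simpa using this
      simp [this]
    calc T * (V ∘L B₂ ∘L adjoint V) = (T ∘L V) ∘L B₂ ∘L adjoint V := by
          ext x; simp [ContinuousLinearMap.mul_apply]
      _ = V ∘L (S * B₂) ∘L adjoint V := by
          rw [hTV]; ext x; simp [ContinuousLinearMap.mul_apply]
      _ = P := by rw [h2l]; ext x; simp [hP]
  calc B₁ * P = B₁ * (T * (V ∘L B₂ ∘L adjoint V)) := by rw [key]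
    _ = (B₁ * T) * (V ∘L B₂ ∘L adjoint V) := by rw [mul_assoc]
    _ = V ∘L B₂ ∘L adjoint V := by rw [h1r, one_mul]
end

section
/- Let H be a real Hilbert space, let x₁, …, x_n ∈ H, y₁, …, y_n ∈ ℝ and λ > 0, and let M ⊆ H be a closed subspace with orthogonal projection P onto M. Define F(β) = (1/n)∑_{i=1}^n (y_i − ⟨β, x_i⟩)² + λ‖β‖² and F_P(β) = (1/n)∑_{i=1}^n (y_i − ⟨Pβ, x_i⟩)² + λ‖β‖², and set Ŝβ = (1/n)∑_{i=1}^n ⟨β, x_i⟩ x_i and r̂ = (1/n)∑_{i=1}^n y_i x_i. Then F_P has a unique global minimizer β̂ over H; β̂ lies in M and coincides with the unique minimizer of F over M; and β̂ satisfies the operator equation (P∘Ŝ∘P + λI)β̂ = P r̂. -/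
open ContinuousLinearMap in
/-- Nyström-subsampled minimization: let `M` be a closed subspace of the
real Hilbert space `H` with orthogonal projection `P` onto `M`.  With
`F β = (1/n) ∑ (y_i - ⟨β, x_i⟩)² + μ ‖β‖²` and
`F_P β = (1/n) ∑ (y_i - ⟨Pβ, x_i⟩)² + μ ‖β‖²`, the functional `F_P` has a unique global
minimizer `b`; `b` lies in `M` and coincides with the unique minimizer of `F` over `M`;
and `b` solves `(P Ŝ P + μ I) b = P r̂`. -/
theorem nystrom_subsampled_minimizer
    {H : Type*} [NormedAddCommGroup H] [InnerProductSpace ℝ H] [CompleteSpace H]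
    (n : ℕ) (hn : 0 < n) (x : Fin n → H) (y : Fin n → ℝ) (μ : ℝ) (hμ : 0 < μ)
    (M : Submodule ℝ H) (hM : IsClosed (M : Set H))
    (P : H →L[ℝ] H) (hP : IsSelfAdjoint P) (hP2 : P * P = P)
    (hPrange : LinearMap.range (P : H →ₗ[ℝ] H) = M)
    (F FP : H → ℝ)
    (hF : ∀ β, F β = (n : ℝ)⁻¹ * ∑ i, (y i - inner ℝ β (x i)) ^ 2 + μ * ‖β‖ ^ 2)
    (hFP : ∀ β, FP β = (n : ℝ)⁻¹ * ∑ i, (y i - inner ℝ (P β) (x i)) ^ 2 + μ * ‖β‖ ^ 2)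
    (Sh : H →L[ℝ] H) (hSh : Sh = (n : ℝ)⁻¹ • ∑ i, (innerSL ℝ (x i)).smulRight (x i))
    (r : H) (hr : r = (n : ℝ)⁻¹ • ∑ i, y i • x i) :
    ∃ b : H,
      (∀ β : H, FP b ≤ FP β) ∧
      (∀ b' : H, (∀ β : H, FP b' ≤ FP β) → b' = b) ∧
      b ∈ M ∧
      (∀ β ∈ M, F b ≤ F β) ∧
      (∀ b' ∈ M, (∀ β ∈ M, F b' ≤ F β) → b' = b) ∧
      (P ∘L Sh ∘L P + μ • (1 : H →L[ℝ] H)) b = P r := by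
  set T : H →L[ℝ] H := P ∘L Sh ∘L P + μ • (1 : H →L[ℝ] H) with hTdef
  have hPsym : ∀ v w : H, (inner ℝ (P v) w : ℝ) = inner ℝ v (P w) := fun v w => hP.isSymmetric v w
  -- pointwise formula for Sh
  have hShInner : ∀ v w : H, (inner ℝ (Sh v) w : ℝ)
      = (n : ℝ)⁻¹ * ∑ i, (inner ℝ (x i) v : ℝ) * (inner ℝ (x i) w : ℝ) := by
    intro v w
    rw [hSh]
    simp only [ContinuousLinearMap.smul_apply, ContinuousLinearMap.sum_apply,
      ContinuousLinearMap.smulRight_apply, innerSL_apply_apply, real_inner_smul_left, sum_inner,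
      Finset.mul_sum]
  -- the quadratic form of T
  have hT : ∀ v w : H, (inner ℝ (T v) w : ℝ)
      = (n : ℝ)⁻¹ * ∑ i, (inner ℝ (x i) (P v) : ℝ) * (inner ℝ (x i) (P w) : ℝ)
        + μ * inner ℝ v w := by
    intro v w
    have hTv : T v = P (Sh (P v)) + μ • v := by
      simp [hTdef, ContinuousLinearMap.add_apply]
    rw [hTv, inner_add_left, real_inner_smul_left, hPsym, hShInner]
  have hsymT : ∀ v w : H, (inner ℝ (T v) w : ℝ) = inner ℝ (T w) v := by
    intro v w
    rw [hT, hT, real_inner_comm]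
    congr 1
    congr 1
    exact Finset.sum_congr rfl fun i _ => mul_comm _ _
  -- formula for ⟪P r, ·⟫
  have hPr : ∀ w : H, (inner ℝ (P r) w : ℝ)
      = (n : ℝ)⁻¹ * ∑ i, y i * (inner ℝ (x i) (P w) : ℝ) := by
    intro w
    rw [hPsym, hr, real_inner_smul_left, sum_inner]
    congr 1
    exact Finset.sum_congr rfl fun i _ => real_inner_smul_left _ _ _
  -- expansion of FP
  have hexp : ∀ β : H, FP β
      = (n : ℝ)⁻¹ * ∑ i, (y i) ^ 2 - 2 * inner ℝ (P r) β + inner ℝ (T β) β := by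
    intro β
    rw [hFP, hT, hPr]
    have h0 : ∑ i, (y i - (inner ℝ (P β) (x i) : ℝ)) ^ 2
        = ∑ i, ((y i) ^ 2 - 2 * (y i * (inner ℝ (x i) (P β) : ℝ))
          + (inner ℝ (x i) (P β) : ℝ) * (inner ℝ (x i) (P β) : ℝ)) :=
      Finset.sum_congr rfl fun i _ => by rw [real_inner_comm]; ring
    rw [h0, Finset.sum_add_distrib, Finset.sum_sub_distrib, ← Finset.mul_sum,
      real_inner_self_eq_norm_sq]
    ring
  -- coercivity of T
  have hpos : ∀ v : H, μ * ‖v‖ ^ 2 ≤ inner ℝ (T v) v := by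
    intro v
    rw [hT, real_inner_self_eq_norm_sq]
    have h0 : (0 : ℝ) ≤ (n : ℝ)⁻¹ * ∑ i, (inner ℝ (x i) (P v) : ℝ) * (inner ℝ (x i) (P v) : ℝ) :=
      mul_nonneg (by positivity) (Finset.sum_nonneg fun i _ => mul_self_nonneg _)
    linarith
  -- Lax–Milgram: solve T b = P r
  let B : H →ₗ[ℝ] H →ₗ[ℝ] ℝ := LinearMap.mk₂ ℝ (fun v w => inner ℝ (T v) w)
    (fun a b c => by simp [inner_add_left])
    (fun c a b => by simp [real_inner_smul_left])
    (fun a b c => by simp [inner_add_right])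
    (fun c a b => by simp [real_inner_smul_right])
  let Bc : H →L[ℝ] H →L[ℝ] ℝ := LinearMap.mkContinuous₂ B ‖T‖ (fun v w => by
    simp only [B, LinearMap.mk₂_apply, Real.norm_eq_abs]
    calc |(inner ℝ (T v) w : ℝ)| ≤ ‖T v‖ * ‖w‖ := abs_real_inner_le_norm _ _
      _ ≤ ‖T‖ * ‖v‖ * ‖w‖ := mul_le_mul_of_nonneg_right (T.le_opNorm v) (norm_nonneg w))
  have hBc : ∀ v w, Bc v w = inner ℝ (T v) w := fun v w => rfl
  have hcoer : IsCoercive Bc := by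
    refine ⟨μ, hμ, fun u => ?_⟩
    rw [hBc]
    have := hpos u
    nlinarith [norm_nonneg u]
  set E := hcoer.continuousLinearEquivOfBilin with hE
  have hET : ∀ v : H, E v = T v := by
    intro v
    apply ext_inner_right ℝ
    intro w
    rw [hcoer.continuousLinearEquivOfBilin_apply, hBc]
  set b : H := E.symm (P r) with hb
  have hTb : T b = P r := by rw [← hET, hb, ContinuousLinearEquiv.apply_symm_apply]
  -- the key identity
  have hdiff : ∀ β : H, FP β = FP b + inner ℝ (T (β - b)) (β - b) := by
    intro β
    have e1 : (inner ℝ (T (β - b)) (β - b) : ℝ)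
        = inner ℝ (T β) β - inner ℝ (T β) b - inner ℝ (T b) β + inner ℝ (T b) b := by
      rw [map_sub, inner_sub_left, inner_sub_right, inner_sub_right]; ring
    have e2 : (inner ℝ (T b) β : ℝ) = inner ℝ (P r) β := by rw [hTb]
    have e3 : (inner ℝ (T b) b : ℝ) = inner ℝ (P r) b := by rw [hTb]
    rw [hexp β, hexp b, e1, hsymT β b, e2, e3]
    ring
  have hmin : ∀ β : H, FP b ≤ FP β := by
    intro β
    have h1 := hdiff β
    have h2 := hpos (β - b)
    nlinarith [norm_nonneg (β - b), sq_nonneg ‖β - b‖]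
  have huniq : ∀ b' : H, FP b' ≤ FP b → b' = b := by
    intro b' h
    have h1 := hdiff b'
    have h2 := hpos (b' - b)
    have h3 : ‖b' - b‖ ^ 2 ≤ 0 := by nlinarith
    have h4 : ‖b' - b‖ ^ 2 = 0 := le_antisymm h3 (sq_nonneg _)
    have h5 : b' - b = 0 := by
      rw [pow_eq_zero_iff (by norm_num : 2 ≠ 0)] at h4
      exact norm_eq_zero.mp h4
    exact sub_eq_zero.mp h5
  -- b ∈ M
  have hbM : b ∈ M := by
    have happ : P (Sh (P b)) + μ • b = P r := by
      have := hTb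
      rw [hTdef] at this
      simpa [ContinuousLinearMap.add_apply] using this
    have hb2 : b = μ⁻¹ • P (r - Sh (P b)) := by
      rw [map_sub]
      rw [eq_comm, inv_smul_eq_iff₀ (ne_of_gt hμ)]
      rw [← happ]
      abel
    rw [hb2, ← hPrange]
    exact Submodule.smul_mem _ _ ⟨r - Sh (P b), rfl⟩
  -- P fixes M
  have hPfix : ∀ z, z ∈ M → P z = z := by
    intro z hz
    rw [← hPrange] at hz
    obtain ⟨w, rfl⟩ := hz
    have := congrArg (fun (Q : H →L[ℝ] H) => Q w) hP2
    simpa [ContinuousLinearMap.mul_apply] using this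
  have hFeq : ∀ z, z ∈ M → F z = FP z := by
    intro z hz
    rw [hF, hFP, hPfix z hz]
  refine ⟨b, hmin, fun b' h' => huniq b' (h' b), hbM, ?_, ?_, hTb⟩
  · intro β hβ
    rw [hFeq b hbM, hFeq β hβ]
    exact hmin β
  · intro b' hb' h'
    apply huniq
    rw [← hFeq b' hb', ← hFeq b hbM]
    exact h' b hbM
end

section
/- Let H be a real Hilbert space, let u₁, …, u_n ∈ H, let v₁, …, v_m ∈ H be linearly independent, let y = (y₁, …, y_n)ᵀ ∈ ℝⁿ and λ > 0. Let K_{nm} ∈ ℝ^{n×m} have entries (K_{nm})_{ij} = ⟨u_i, v_j⟩ and let K_{mm} ∈ ℝ^{m×m} have entries (K_{mm})_{jk} = ⟨v_j, v_k⟩. Then the matrix K_{nm}ᵀK_{nm} + λn K_{mm} is invertible, and the unique minimizer over the subspace span{v₁, …, v_m} of the functional β ↦ (1/n)∑_{i=1}^n (y_i − ⟨β, u_i⟩)² + λ‖β‖² is β̂ = ∑_{j=1}^m ã_j v_j, where ã = (ã₁, …, ã_m)ᵀ = (K_{nm}ᵀK_{nm} + λn K_{mm})^{-1} K_{nm}ᵀ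 y. -/
open Matrix in
/-- Nyström coefficient formula: with cross-Gram matrix
`(K_{nm})_{ij} = ⟨u_i, v_j⟩` and Gram matrix `(K_{mm})_{jk} = ⟨v_j, v_k⟩` of linearly
independent `v_j`, the matrix `K_{nm}ᵀ K_{nm} + μ n K_{mm}` is invertible and the
unique minimizer over `span{v_1, …, v_m}` of
`β ↦ (1/n) ∑ (y_i - ⟨β, u_i⟩)² + μ ‖β‖²` is `β̂ = ∑ ã_j v_j` with
`ã = (K_{nm}ᵀ K_{nm} + μ n K_{mm})⁻¹ K_{nm}ᵀ y`. -/
theorem nystrom_coefficient_formula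
    {H : Type*} [NormedAddCommGroup H] [InnerProductSpace ℝ H] [CompleteSpace H]
    (n m : ℕ) (hn : 0 < n) (u : Fin n → H) (v : Fin m → H)
    (hv : LinearIndependent ℝ v) (y : Fin n → ℝ) (μ : ℝ) (hμ : 0 < μ)
    (Knm : Matrix (Fin n) (Fin m) ℝ) (hKnm : ∀ i j, Knm i j = inner ℝ (u i) (v j))
    (Kmm : Matrix (Fin m) (Fin m) ℝ) (hKmm : ∀ j k, Kmm j k = inner ℝ (v j) (v k))
    (F : H → ℝ)
    (hF : ∀ β, F β = (n : ℝ)⁻¹ * ∑ i, (y i - inner ℝ β (u i)) ^ 2 + μ * ‖β‖ ^ 2)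
    (a : Fin m → ℝ)
    (ha : a = (Knmᵀ * Knm + (μ * (n : ℝ)) • Kmm)⁻¹.mulVec (Knmᵀ.mulVec y)) :
    IsUnit (Knmᵀ * Knm + (μ * (n : ℝ)) • Kmm) ∧
    (∑ j, a j • v j) ∈ Submodule.span ℝ (Set.range v) ∧
    (∀ β ∈ Submodule.span ℝ (Set.range v), F (∑ j, a j • v j) ≤ F β) ∧
    (∀ b ∈ Submodule.span ℝ (Set.range v),
      (∀ β ∈ Submodule.span ℝ (Set.range v), F b ≤ F β) → b = ∑ j, a j • v j) := by
  set M : Matrix (Fin m) (Fin m) ℝ := Knmᵀ * Knm + (μ * (n : ℝ)) • Kmm with hMdef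
  have hn' : (0:ℝ) < (n:ℝ) := by exact_mod_cast hn
  -- Gram identity
  have hgram : ∀ c : Fin m → ℝ, c ⬝ᵥ Kmm *ᵥ c = ‖∑ j, c j • v j‖ ^ 2 := by
    intro c
    rw [← real_inner_self_eq_norm_sq, sum_inner]
    simp only [dotProduct, Matrix.mulVec, dotProduct, hKmm,
      real_inner_smul_left, inner_sum, real_inner_smul_right, Finset.mul_sum]
    exact Finset.sum_congr rfl fun j _ => Finset.sum_congr rfl fun k _ => by ring
  -- inner product with u i
  have hinner : ∀ (c : Fin m → ℝ) (i : Fin n),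
      (inner ℝ (∑ j, c j • v j) (u i) : ℝ) = (Knm *ᵥ c) i := by
    intro c i
    simp only [sum_inner, real_inner_smul_left, Matrix.mulVec, dotProduct, hKnm]
    exact Finset.sum_congr rfl fun j _ => by rw [real_inner_comm]; ring
  -- quadratic form of M
  have h1 : ∀ c : Fin m → ℝ, c ⬝ᵥ (Knmᵀ * Knm) *ᵥ c = (Knm *ᵥ c) ⬝ᵥ (Knm *ᵥ c) := by
    intro c
    rw [← Matrix.mulVec_mulVec, Matrix.dotProduct_mulVec, Matrix.vecMul_transpose]
  have hq : ∀ c : Fin m → ℝ,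
      c ⬝ᵥ M *ᵥ c = (Knm *ᵥ c) ⬝ᵥ (Knm *ᵥ c) + (μ * (n:ℝ)) * (c ⬝ᵥ Kmm *ᵥ c) := by
    intro c
    rw [hMdef, Matrix.add_mulVec, dotProduct_add, h1, Matrix.smul_mulVec,
      dotProduct_smul, smul_eq_mul]
  -- symmetry of M
  have hMsymm : Mᵀ = M := by
    ext i j
    simp only [hMdef, Matrix.transpose_apply, Matrix.add_apply, Matrix.mul_apply,
      Matrix.smul_apply, Matrix.transpose_apply, smul_eq_mul, hKmm]
    rw [real_inner_comm (v j)]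
    exact congrArg₂ _ (Finset.sum_congr rfl fun k _ => mul_comm _ _) rfl
  have hMH : M.IsHermitian := by
    have h : Mᴴ = Mᵀ := by
      ext i j; simp [Matrix.conjTranspose_apply]
    rw [Matrix.IsHermitian, h, hMsymm]
  -- positive definiteness of M
  have hMPD : M.PosDef := by
    refine Matrix.PosDef.of_dotProduct_mulVec_pos hMH fun x hx => ?_
    rw [star_trivial, hq, hgram]
    have hs : (∑ j, x j • v j) ≠ 0 := by
      intro h0
      exact hx (funext fun j => Fintype.linearIndependent_iff.1 hv x h0 j)
    have h2 : 0 < (μ * (n:ℝ)) * ‖∑ j, x j • v j‖ ^ 2 := by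
      have := norm_pos_iff.2 hs
      positivity
    have h3 : 0 ≤ (Knm *ᵥ x) ⬝ᵥ (Knm *ᵥ x) :=
      Finset.sum_nonneg fun i _ => mul_self_nonneg _
    linarith
  have hMunit : IsUnit M := hMPD.isUnit
  -- a satisfies the normal equation
  have hMa : M *ᵥ a = Knmᵀ *ᵥ y := by
    rw [ha, Matrix.mulVec_mulVec,
      Matrix.mul_nonsing_inv _ ((Matrix.isUnit_iff_isUnit_det M).1 hMunit),
      Matrix.one_mulVec]
  -- symmetry of the bilinear form
  have hsymm : ∀ c d : Fin m → ℝ, c ⬝ᵥ M *ᵥ d = d ⬝ᵥ M *ᵥ c := by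
    intro c d
    rw [Matrix.dotProduct_mulVec, ← hMsymm, Matrix.vecMul_transpose, hMsymm,
      dotProduct_comm]
  -- expansion of F on coefficients
  have hsq : ∀ c : Fin m → ℝ, ∑ i, (y i - (Knm *ᵥ c) i) ^ 2
      = y ⬝ᵥ y - 2 * (c ⬝ᵥ Knmᵀ *ᵥ y) + c ⬝ᵥ (Knmᵀ * Knm) *ᵥ c := by
    intro c
    have hw : c ⬝ᵥ Knmᵀ *ᵥ y = y ⬝ᵥ (Knm *ᵥ c) := by
      rw [Matrix.dotProduct_mulVec, Matrix.vecMul_transpose, dotProduct_comm,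
        Matrix.dotProduct_mulVec, dotProduct_comm]
    rw [hw, h1]
    simp only [dotProduct, Finset.mul_sum, ← Finset.sum_sub_distrib,
      ← Finset.sum_add_distrib]
    exact Finset.sum_congr rfl fun i _ => by ring
  have hFc : ∀ c : Fin m → ℝ, F (∑ j, c j • v j)
      = (n:ℝ)⁻¹ * (y ⬝ᵥ y - 2 * (c ⬝ᵥ Knmᵀ *ᵥ y) + c ⬝ᵥ M *ᵥ c) := by
    intro c
    rw [hF]
    have : ∀ i, (y i - (inner ℝ (∑ j, c j • v j) (u i) : ℝ)) ^ 2
        = (y i - (Knm *ᵥ c) i) ^ 2 := fun i => by rw [hinner]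
    simp only [this]
    rw [hsq, h1, ← hgram, hq]
    field_simp
    ring
  -- key identity
  have hkey : ∀ c : Fin m → ℝ, F (∑ j, c j • v j)
      = F (∑ j, a j • v j) + (n:ℝ)⁻¹ * ((c - a) ⬝ᵥ M *ᵥ (c - a)) := by
    intro c
    rw [hFc, hFc]
    have hexp : (c - a) ⬝ᵥ M *ᵥ (c - a)
        = c ⬝ᵥ M *ᵥ c - 2 * (c ⬝ᵥ M *ᵥ a) + a ⬝ᵥ M *ᵥ a := by
      rw [sub_dotProduct, Matrix.mulVec_sub, dotProduct_sub,
        dotProduct_sub, hsymm a c]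
      ring
    rw [hexp, hMa]
    ring
  have hq0 : ∀ c : Fin m → ℝ, 0 ≤ c ⬝ᵥ M *ᵥ c := by
    intro c
    rcases eq_or_ne c 0 with rfl | hc
    · simp
    · exact le_of_lt (by simpa [star_trivial] using hMPD.dotProduct_mulVec_pos hc)
  have hmem : (∑ j, a j • v j) ∈ Submodule.span ℝ (Set.range v) :=
    Submodule.sum_smul_mem _ _ fun j _ => Submodule.subset_span ⟨j, rfl⟩
  have hmin : ∀ β ∈ Submodule.span ℝ (Set.range v), F (∑ j, a j • v j) ≤ F β := by
    intro β hβ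
    obtain ⟨c, rfl⟩ := (Submodule.mem_span_range_iff_exists_fun ℝ).1 hβ
    rw [hkey c]
    have : 0 ≤ (n:ℝ)⁻¹ * ((c - a) ⬝ᵥ M *ᵥ (c - a)) :=
      mul_nonneg (by positivity) (hq0 _)
    linarith
  refine ⟨hMunit, hmem, hmin, ?_⟩
  intro b hb hbmin
  obtain ⟨c, rfl⟩ := (Submodule.mem_span_range_iff_exists_fun ℝ).1 hb
  have hle : F (∑ j, c j • v j) ≤ F (∑ j, a j • v j) := hbmin _ hmem
  have hge := hmin _ hb
  have heq : (c - a) ⬝ᵥ M *ᵥ (c - a) = 0 := by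
    have h := hkey c
    have h2 : (n:ℝ)⁻¹ * ((c - a) ⬝ᵥ M *ᵥ (c - a)) ≤ 0 := by linarith
    have h3 := hq0 (c - a)
    nlinarith [inv_pos.2 hn']
  have hca : c = a := by
    by_contra hne
    have : c - a ≠ 0 := sub_ne_zero.2 hne
    have := hMPD.dotProduct_mulVec_pos this
    rw [star_trivial] at this
    exact absurd heq (ne_of_gt this)
  rw [hca]
end
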